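/- For every round t ≥ 1 the following hold. (i) For any opinion i ∈ [k], conditioned on the configuration at round t−1, α_t(i) − E_{t−1}[α_t(i)] satisfies the (1/n, s)-Bernstein condition with s = α_{t−1}(i)/n for 3-Majority and s = α_{t−1}(i)·(α_{t−1}(i) + γ_{t−1})/n for 2-Choices. (ii) For any distinct opinions i, j, conditioned on the configuration at round t−1, δ_t(i,j) − E_{t−1}[δ_t(i,j)] satisfies the (2/n, s)-Bernstein condition with s = (2/n)·(α_{t−1}(i) + α_{t−1}(j)) for 3-Majority and s = (1/n)·(α_{t−1}(i) + α_{t−1}(j))·(α_{t−1}(i) + α_{t−1}(j) + γ_{t−1}) for 2-Choices. (iii) Conditioned on the configuration at round t−1, γ_{t−1} − γ_t satisfies the one-sided (2·√γ_{t−1}/n, s)-Bernstein condition with s = 4·γ_{t−1}^{3/2}/n for 3-Majority and s = 8·γ_{t−1}²/n for 2-Choices. -/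

import Mathlib

open MeasureTheory ProbabilityTheory
open scoped ENNReal

noncomputable section

/-- A configuration: each of the `n` vertices holds one of `k` opinions. -/
abbrev Config (n k : ℕ) := Fin n → Fin k

/-- `alphaFrac σ i` is the fraction of vertices holding opinion `i`. -/
def alphaFrac {n k : ℕ} (σ : Config n k) (i : Fin k) : ℝ :=
  (Finset.univ.filter (fun v => σ v = i)).card / (n : ℝ)

/-- `gammaNorm σ = ∑ i, α(i)²`, the squared ℓ²-norm of the opinion fractions. -/
def gammaNorm {n k : ℕ} (σ : Config n k) : ℝ :=
  ∑ i : Fin k, alphaFrac σ i ^ 2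

/-- Random seed for one round of 3-Majority: each vertex picks three vertices. -/
abbrev Maj3Seed (n : ℕ) := Fin n → Fin n × Fin n × Fin n

/-- Random seed for one round of 2-Choices: each vertex picks two vertices. -/
abbrev Ch2Seed (n : ℕ) := Fin n → Fin n × Fin n

/-- One synchronous round of 3-Majority given the random choices `w`. -/
def maj3Update {n k : ℕ} (σ : Config n k) (w : Maj3Seed n) : Config n k :=
  fun v => if σ (w v).1 = σ (w v).2.1 then σ (w v).1 else σ (w v).2.2

/-- One synchronous round of 2-Choices given the random choices `w`. -/
def ch2Update {n k : ℕ} (σ : Config n k) (w : Ch2Seed n) : Config n k :=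
  fun v => if σ (w v).1 = σ (w v).2 then σ (w v).1 else σ v

/-- Trajectory of 3-Majority from `σ0` driven by the seed sequence `ω`. -/
def maj3Traj {n k : ℕ} (σ0 : Config n k) (ω : ℕ → Maj3Seed n) : ℕ → Config n k
  | 0 => σ0
  | t + 1 => maj3Update (maj3Traj σ0 ω t) (ω t)

/-- Trajectory of 2-Choices from `σ0` driven by the seed sequence `ω`. -/
def ch2Traj {n k : ℕ} (σ0 : Config n k) (ω : ℕ → Ch2Seed n) : ℕ → Config n k
  | 0 => σ0
  | t + 1 => ch2Update (ch2Traj σ0 ω t) (ω t)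

/-- The uniform probability measure on a finite type. -/
def uniformOn (A : Type*) [MeasurableSpace A] [Fintype A] : Measure A :=
  (Fintype.card A : ℝ≥0∞)⁻¹ • Measure.count

/-- `U 0, U 1, …` is an i.i.d. sequence of uniformly distributed random seeds. -/
def IsIIDUniformSeeds {Ω A : Type*} [MeasurableSpace Ω] [MeasurableSpace A] [Fintype A]
    (μ : Measure Ω) (U : ℕ → Ω → A) : Prop :=
  iIndepFun U μ ∧ ∀ t : ℕ, Measure.map (U t) μ = uniformOn A

/-- Distribution of the next configuration of 3-Majority, given the current one. -/
def maj3Step {n k : ℕ} (σ : Config n k) : Measure (Config n k) :=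
  Measure.map (maj3Update σ) (uniformOn (Maj3Seed n))

/-- Distribution of the next configuration of 2-Choices, given the current one. -/
def ch2Step {n k : ℕ} (σ : Config n k) : Measure (Config n k) :=
  Measure.map (ch2Update σ) (uniformOn (Ch2Seed n))

/-- `X` satisfies the `(D, s)`-Bernstein condition. -/
def BernsteinCond {Ω : Type*} [MeasurableSpace Ω] (μ : Measure Ω) (X : Ω → ℝ)
    (D s : ℝ) : Prop :=
  ∀ l : ℝ, |l| * D < 3 →
    (∫⁻ ω, ENNReal.ofReal (Real.exp (l * X ω)) ∂μ) ≤
      ENNReal.ofReal (Real.exp (l ^ 2 * s / 2 / (1 - |l| * D / 3)))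

/-- `X` satisfies the one-sided `(D, s)`-Bernstein condition. -/
def OneSidedBernsteinCond {Ω : Type*} [MeasurableSpace Ω] (μ : Measure Ω) (X : Ω → ℝ)
    (D s : ℝ) : Prop :=
  ∀ l : ℝ, 0 ≤ l → l * D < 3 →
    (∫⁻ ω, ENNReal.ofReal (Real.exp (l * X ω)) ∂μ) ≤
      ENNReal.ofReal (Real.exp (l ^ 2 * s / 2 / (1 - l * D / 3)))

-- ==================== auxiliary lemmas ====================
section AuxExp
open Finset

/-- `exp t ≤ 1 + t + t²/2` for `t ≤ 0`. -/
lemma exp_le_quadratic_of_nonpos {t : ℝ} (ht : t ≤ 0) :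
    Real.exp t ≤ 1 + t + t ^ 2 / 2 := by
  have key : ∀ x : ℝ, 0 ≤ x → Real.exp (-x) ≤ 1 - x + x ^ 2 / 2 := by
    intro x hx
    have h1 : ∀ y : ℝ, HasDerivAt (fun y : ℝ => 1 - y + y ^ 2 / 2 - Real.exp (-y))
        (-1 + y + Real.exp (-y)) y := by
      intro y
      have he : HasDerivAt (fun y : ℝ => Real.exp (-y)) (-Real.exp (-y)) y := by
        exact ((Real.hasDerivAt_exp (-y)).comp y (hasDerivAt_neg y)).congr_deriv (by ring)
      have hp : HasDerivAt (fun y : ℝ => 1 - y + y ^ 2 / 2) (-1 + y) y := by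
        have : HasDerivAt (fun y : ℝ => 1 - y + y ^ 2 / 2) (0 - 1 + 2 * y ^ 1 / 2) y := by
          exact (((hasDerivAt_const y (1:ℝ)).sub (hasDerivAt_id y)).add
            (((hasDerivAt_pow 2 y)).div_const 2))
        simpa using this
      exact (hp.sub he).congr_deriv (by ring)
    have hmono : MonotoneOn (fun y : ℝ => 1 - y + y ^ 2 / 2 - Real.exp (-y)) (Set.Ici 0) := by
      apply monotoneOn_of_deriv_nonneg (convex_Ici 0)
      · exact (Continuous.continuousOn (by continuity))
      · intro y _
        exact (h1 y).differentiableAt.differentiableWithinAt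
      · intro y hy
        rw [(h1 y).deriv]
        have := Real.add_one_le_exp (-y)
        nlinarith [this]
    have := hmono (Set.mem_Ici.2 le_rfl) (Set.mem_Ici.2 hx) hx
    simp at this
    nlinarith [this]
  have := key (-t) (by linarith)
  simpa using this

/-- `exp t ≤ 1 + t + t²/(2(1 - t/3))` for `0 ≤ t < 3`. -/
lemma exp_le_of_lt_three {t : ℝ} (ht0 : 0 ≤ t) (ht3 : t < 3) :
    Real.exp t ≤ 1 + t + t ^ 2 / (2 * (1 - t / 3)) := by
  have hsum : Summable (fun n : ℕ => t ^ n / n.factorial) := Real.summable_pow_div_factorial t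
  have hexp : Real.exp t = ∑' n : ℕ, t ^ n / n.factorial := by
    rw [Real.exp_eq_exp_ℝ, NormedSpace.exp_eq_tsum_div]
  have hsplit : (∑ i ∈ range 2, t ^ i / i.factorial) + ∑' n : ℕ, t ^ (n + 2) / (n + 2).factorial
      = ∑' n : ℕ, t ^ n / n.factorial := Summable.sum_add_tsum_nat_add 2 hsum
  have htail : ∑' n : ℕ, t ^ (n + 2) / (n + 2).factorial ≤ t ^ 2 / (2 * (1 - t / 3)) := by
    have hgs : Summable (fun n : ℕ => t ^ 2 / 2 * (t / 3) ^ n) :=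
      (summable_geometric_of_lt_one (by positivity) (by linarith)).mul_left _
    have hle : ∀ n : ℕ, t ^ (n + 2) / (n + 2).factorial ≤ t ^ 2 / 2 * (t / 3) ^ n := by
      intro n
      have hfacn : 2 * 3 ^ n ≤ (n + 2).factorial := by
        induction n with
        | zero => simp [Nat.factorial]
        | succ m ih =>
          have h1 : (m + 3).factorial = (m + 3) * (m + 2).factorial := rfl
          calc 2 * 3 ^ (m + 1) = 3 * (2 * 3 ^ m) := by ring
            _ ≤ 3 * (m + 2).factorial := by omega
            _ ≤ (m + 3) * (m + 2).factorial := by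
                have : 3 ≤ m + 3 := by omega
                exact Nat.mul_le_mul_right _ this
            _ = (m + 3).factorial := h1.symm
      have hfac : (2 * 3 ^ n : ℝ) ≤ ((n + 2).factorial : ℝ) := by
        exact_mod_cast hfacn
      have hpos : (0:ℝ) < 2 * 3 ^ n := by positivity
      have htn : 0 ≤ t ^ n := by positivity
      calc t ^ (n + 2) / (n + 2).factorial ≤ t ^ (n + 2) / (2 * 3 ^ n) := by
            apply div_le_div_of_nonneg_left (by positivity) hpos hfac
        _ = t ^ 2 / 2 * (t / 3) ^ n := by
            rw [pow_add, div_pow]; ring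
    calc ∑' n : ℕ, t ^ (n + 2) / (n + 2).factorial
        ≤ ∑' n : ℕ, t ^ 2 / 2 * (t / 3) ^ n := Summable.tsum_le_tsum hle ((hsum.comp_injective (add_left_injective 2)).congr (by simp)) hgs
      _ = t ^ 2 / 2 * (1 - t / 3)⁻¹ := by
          rw [tsum_mul_left, tsum_geometric_of_lt_one (by positivity) (by linarith)]
      _ ≤ t ^ 2 / (2 * (1 - t / 3)) := by
          have hne : (1 - t / 3) ≠ 0 := by intro h; nlinarith
          apply le_of_eq
          field_simp
  have : Real.exp t = (1 + t) + ∑' n : ℕ, t ^ (n + 2) / (n + 2).factorial := by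
    rw [hexp, ← hsplit]; norm_num [Finset.sum_range_succ]
  rw [this]
  linarith

/-- Combined pointwise bound: `exp t ≤ 1 + t + K t²` with `K = 1/(2(1-c/3))`, for `t ≤ c < 3`, `0 ≤ c`. -/
lemma exp_le_one_add_add {t c : ℝ} (hc0 : 0 ≤ c) (hc3 : c < 3) (htc : t ≤ c) :
    Real.exp t ≤ 1 + t + t ^ 2 * (1 / (2 * (1 - c / 3))) := by
  have hden : 0 < 1 - c / 3 := by linarith
  rcases le_or_gt t 0 with ht | ht
  · have h1 := exp_le_quadratic_of_nonpos ht
    have hK : (1:ℝ) / 2 ≤ 1 / (2 * (1 - c / 3)) := by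
      rw [div_le_div_iff₀ (by norm_num) (by positivity)]
      nlinarith
    nlinarith [sq_nonneg t]
  · have h1 := exp_le_of_lt_three ht.le (lt_of_le_of_lt htc hc3)
    have h2 : t ^ 2 / (2 * (1 - t / 3)) ≤ t ^ 2 * (1 / (2 * (1 - c / 3))) := by
      rw [div_eq_mul_one_div]
      apply mul_le_mul_of_nonneg_left _ (by positivity)
      rw [div_le_div_iff₀ (by nlinarith) (by positivity)]
      nlinarith
    linarith

/-- Master MGF bound for a sum of independent (coordinate-wise) terms over the
uniform measure on `Fin n → B`, in finite-sum form. -/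
lemma master_sum {n : ℕ} {B : Type*} [Fintype B] (hB : 0 < Fintype.card B)
    (f : Fin n → B → ℝ) (g : (Fin n → B) → ℝ) (l c s : ℝ)
    (hc0 : 0 ≤ c) (hc3 : c < 3) (hs0 : 0 ≤ l ^ 2 * s)
    (m : Fin n → ℝ) (hm : ∀ v, ∑ b, f v b = (Fintype.card B : ℝ) * m v)
    (hg : ∀ w, l * g w ≤ ∑ v, l * (f v (w v) - m v))
    (hbd : ∀ v b, l * (f v b - m v) ≤ c)
    (hvar : ∑ v, (∑ b, (l * (f v b - m v)) ^ 2) ≤ (Fintype.card B : ℝ) * (l ^ 2 * s)) :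
    ∑ w : Fin n → B, Real.exp (l * g w)
      ≤ (Fintype.card B : ℝ) ^ n * Real.exp (l ^ 2 * s / 2 / (1 - c / 3)) := by
  classical
  set N : ℝ := (Fintype.card B : ℝ) with hN
  have hN0 : 0 < N := by rw [hN]; exact_mod_cast hB
  have hden : 0 < 1 - c / 3 := by linarith
  set K : ℝ := 1 / (2 * (1 - c / 3)) with hKdef
  have hK0 : 0 < K := by positivity
  set x : Fin n → B → ℝ := fun v b => l * (f v b - m v) with hx
  have hxsum : ∀ v, ∑ b, x v b = 0 := by
    intro v
    simp only [hx]
    rw [← Finset.mul_sum]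
    have : ∑ b, (f v b - m v) = 0 := by
      rw [Finset.sum_sub_distrib, hm v]
      simp [hN]
    rw [this, mul_zero]
  set S : Fin n → ℝ := fun v => ∑ b, (x v b) ^ 2 with hS
  have hS0 : ∀ v, 0 ≤ S v := fun v => Finset.sum_nonneg fun b _ => sq_nonneg _
  -- per-coordinate factor bound
  have hfac : ∀ v, ∑ b, Real.exp (x v b) ≤ N * Real.exp (K * S v / N) := by
    intro v
    have h1 : ∑ b, Real.exp (x v b) ≤ ∑ b, (1 + x v b + (x v b) ^ 2 * K) :=
      Finset.sum_le_sum fun b _ => exp_le_one_add_add hc0 hc3 (hbd v b)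
    have h2 : ∑ b, (1 + x v b + (x v b) ^ 2 * K) = N + K * S v := by
      rw [Finset.sum_add_distrib, Finset.sum_add_distrib, hxsum v, ← Finset.sum_mul]
      simp [hS, hN, mul_comm]
    have h3 : N + K * S v ≤ N * Real.exp (K * S v / N) := by
      have := Real.add_one_le_exp (K * S v / N)
      calc N + K * S v = N * (K * S v / N + 1) := by field_simp; ring
        _ ≤ N * Real.exp (K * S v / N) := by
            apply mul_le_mul_of_nonneg_left this hN0.le
    linarith
  -- chain
  calc ∑ w : Fin n → B, Real.exp (l * g w)
      ≤ ∑ w : Fin n → B, ∏ v, Real.exp (x v (w v)) := by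
        apply Finset.sum_le_sum
        intro w _
        rw [← Real.exp_sum]
        exact Real.exp_le_exp.2 (hg w)
    _ = ∏ v, ∑ b, Real.exp (x v b) := by
        rw [Finset.prod_univ_sum (fun _ => Finset.univ) (fun v b => Real.exp (x v b))]
        rw [Fintype.piFinset_univ]
    _ ≤ ∏ v, (N * Real.exp (K * S v / N)) := by
        apply Finset.prod_le_prod
        · intro v _; exact Finset.sum_nonneg fun b _ => (Real.exp_pos _).le
        · intro v _; exact hfac v
    _ = N ^ n * Real.exp (∑ v, K * S v / N) := by
        rw [Finset.prod_mul_distrib, Finset.prod_const, Real.exp_sum]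
        simp [Finset.card_univ]
    _ ≤ N ^ n * Real.exp (l ^ 2 * s / 2 / (1 - c / 3)) := by
        apply mul_le_mul_of_nonneg_left _ (by positivity)
        apply Real.exp_le_exp.2
        have h4 : ∑ v, K * S v / N = K / N * ∑ v, S v := by
          rw [Finset.mul_sum]; apply Finset.sum_congr rfl; intro v _; ring
        rw [h4]
        have h5 : K / N * ∑ v, S v ≤ K / N * (N * (l ^ 2 * s)) := by
          apply mul_le_mul_of_nonneg_left _ (by positivity)
          exact hvar
        calc K / N * ∑ v, S v ≤ K / N * (N * (l ^ 2 * s)) := h5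
          _ = l ^ 2 * s * K := by field_simp
          _ = l ^ 2 * s / 2 / (1 - c / 3) := by
              rw [hKdef]
              field_simp

end AuxExp

section AuxMeasure
open Finset

variable {A : Type*} [Fintype A] [MeasurableSpace A] [MeasurableSingletonClass A]

lemma uniformOn_singleton' (a : A) : uniformOn A {a} = (Fintype.card A : ℝ≥0∞)⁻¹ := by
  simp [_root_.uniformOn, Measure.smul_apply, Measure.count_singleton, smul_eq_mul]

lemma lintegral_uniformOn_le (h : A → ℝ) (hh : ∀ a, 0 ≤ h a) (r : ℝ)
    (hA : 0 < Fintype.card A)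
    (hb : ∑ a, h a ≤ (Fintype.card A : ℝ) * r) :
    ∫⁻ a, ENNReal.ofReal (h a) ∂(uniformOn A) ≤ ENNReal.ofReal r := by
  rw [lintegral_fintype]
  have h1 : ∑ a, ENNReal.ofReal (h a) * uniformOn A {a}
      = (Fintype.card A : ℝ≥0∞)⁻¹ * ENNReal.ofReal (∑ a, h a) := by
    rw [ENNReal.ofReal_sum_of_nonneg (fun a _ => hh a), Finset.mul_sum]
    refine Finset.sum_congr rfl fun a _ => ?_
    rw [uniformOn_singleton', mul_comm]
  rw [h1]
  have h2 : ENNReal.ofReal (∑ a, h a) ≤ (Fintype.card A : ℝ≥0∞) * ENNReal.ofReal r := by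
    calc ENNReal.ofReal (∑ a, h a) ≤ ENNReal.ofReal ((Fintype.card A : ℝ) * r) :=
          ENNReal.ofReal_le_ofReal hb
      _ = (Fintype.card A : ℝ≥0∞) * ENNReal.ofReal r := by
          rw [ENNReal.ofReal_mul (by positivity)]
          congr 1
          simp
  calc (Fintype.card A : ℝ≥0∞)⁻¹ * ENNReal.ofReal (∑ a, h a)
      ≤ (Fintype.card A : ℝ≥0∞)⁻¹ * ((Fintype.card A : ℝ≥0∞) * ENNReal.ofReal r) :=
        mul_le_mul_right h2 _
    _ = ENNReal.ofReal r := by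
        rw [← mul_assoc, ENNReal.inv_mul_cancel (by exact_mod_cast hA.ne') (by simp), one_mul]

lemma integral_uniformOn (F : A → ℝ) (hA : 0 < Fintype.card A) :
    ∫ a, F a ∂(uniformOn A) = (∑ a, F a) / (Fintype.card A : ℝ) := by
  have hfin : IsFiniteMeasure (uniformOn A) := by
    constructor
    rw [show (uniformOn A) = (Fintype.card A : ℝ≥0∞)⁻¹ • Measure.count from rfl,
      Measure.smul_apply, Measure.count_apply_finite _ (Set.finite_univ)]
    simp only [smul_eq_mul]
    exact lt_of_le_of_lt (mul_le_mul_left (le_refl _) _) (by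
      apply ENNReal.mul_lt_top (by simp [hA]) (by simp [Set.Finite.toFinset]))
  rw [integral_fintype Integrable.of_finite]
  have hsing : ∀ a : A, ((uniformOn A) {a}).toReal = (Fintype.card A : ℝ)⁻¹ := by
    intro a
    rw [uniformOn_singleton']
    simp [ENNReal.toReal_inv]
  rw [Finset.sum_div]
  refine Finset.sum_congr rfl fun a _ => ?_
  rw [measureReal_def, hsing a, smul_eq_mul, div_eq_mul_inv, mul_comm]

end AuxMeasure

section AuxCounting
open Finset

/-- Grouping a sum over vertices by their opinion. -/
lemma sum_comp_config {n k : ℕ} (σ : Config n k) (ψ : Fin k → ℝ) :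
    ∑ v : Fin n, ψ (σ v)
      = ∑ t : Fin k, ((Finset.univ.filter (fun v => σ v = t)).card : ℝ) * ψ t := by
  classical
  rw [← Finset.sum_fiberwise Finset.univ σ (fun v => ψ (σ v))]
  refine Finset.sum_congr rfl fun t _ => ?_
  rw [Finset.sum_congr rfl (fun v hv => by
    rw [(Finset.mem_filter.1 hv).2]), Finset.sum_const, nsmul_eq_mul]

/-- Diagonal pair sums. -/
lemma sum_pair_diag {n k : ℕ} (σ : Config n k) (ψ : Fin k → ℝ) :
    ∑ p : Fin n × Fin n, (if σ p.1 = σ p.2 then ψ (σ p.1) else 0)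
      = ∑ t : Fin k, ((Finset.univ.filter (fun v => σ v = t)).card : ℝ) ^ 2 * ψ t := by
  classical
  rw [Fintype.sum_prod_type]
  have inner : ∀ v1 : Fin n, ∑ v2 : Fin n, (if σ v1 = σ v2 then ψ (σ v1) else 0)
      = ((Finset.univ.filter (fun v => σ v = σ v1)).card : ℝ) * ψ (σ v1) := by
    intro v1
    rw [← Finset.sum_filter, Finset.sum_const, nsmul_eq_mul]
    congr 3
    ext v2
    simp [eq_comm]
  rw [Finset.sum_congr rfl (fun v1 _ => inner v1),
    sum_comp_config σ (fun t => ((Finset.univ.filter (fun v => σ v = t)).card : ℝ) * ψ t)]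
  refine Finset.sum_congr rfl fun t _ => by ring

/-- Sum over 3-majority seeds of one vertex. -/
lemma sum_maj3_pick {n k : ℕ} (σ : Config n k) (φ : Fin k → ℝ) :
    ∑ b : Fin n × Fin n × Fin n, φ (if σ b.1 = σ b.2.1 then σ b.1 else σ b.2.2)
      = (n : ℝ) * ∑ t, ((Finset.univ.filter (fun v => σ v = t)).card : ℝ) ^ 2 * φ t
        + ((n : ℝ) ^ 2 - ∑ t, ((Finset.univ.filter (fun v => σ v = t)).card : ℝ) ^ 2)
            * ∑ t, ((Finset.univ.filter (fun v => σ v = t)).card : ℝ) * φ t := by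
  classical
  set T : ℝ := ∑ t, ((Finset.univ.filter (fun v => σ v = t)).card : ℝ) * φ t with hT
  have expand : ∀ v1 v2 : Fin n, ∑ v3 : Fin n, φ (if σ v1 = σ v2 then σ v1 else σ v3)
      = (if σ v1 = σ v2 then (n : ℝ) * φ (σ v1) - T else 0) + T := by
    intro v1 v2
    by_cases h : σ v1 = σ v2
    · simp [h, Finset.sum_const, Finset.card_univ, nsmul_eq_mul]
    · simp only [h, if_false, zero_add]
      exact sum_comp_config σ φ
  calc ∑ b : Fin n × Fin n × Fin n, φ (if σ b.1 = σ b.2.1 then σ b.1 else σ b.2.2)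
      = ∑ v1 : Fin n, ∑ v2 : Fin n, ∑ v3 : Fin n, φ (if σ v1 = σ v2 then σ v1 else σ v3) := by
        rw [Fintype.sum_prod_type]
        exact Finset.sum_congr rfl fun v1 _ => Fintype.sum_prod_type _
    _ = ∑ p : Fin n × Fin n, ((if σ p.1 = σ p.2 then (n : ℝ) * φ (σ p.1) - T else 0) + T) := by
        rw [Fintype.sum_prod_type]
        exact Finset.sum_congr rfl fun v1 _ => Finset.sum_congr rfl fun v2 _ => expand v1 v2
    _ = (∑ t, ((Finset.univ.filter (fun v => σ v = t)).card : ℝ) ^ 2 * ((n : ℝ) * φ t - T))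
          + (n : ℝ) ^ 2 * T := by
        rw [Finset.sum_add_distrib, sum_pair_diag σ (fun t => (n : ℝ) * φ t - T),
          Finset.sum_const, Finset.card_univ, Fintype.card_prod, Fintype.card_fin, nsmul_eq_mul]
        push_cast
        ring
    _ = (n : ℝ) * ∑ t, ((Finset.univ.filter (fun v => σ v = t)).card : ℝ) ^ 2 * φ t
        + ((n : ℝ) ^ 2 - ∑ t, ((Finset.univ.filter (fun v => σ v = t)).card : ℝ) ^ 2) * T := by
        rw [Finset.sum_congr rfl (fun t _ => show
          ((Finset.univ.filter (fun v => σ v = t)).card : ℝ) ^ 2 * ((n : ℝ) * φ t - T)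
            = (n : ℝ) * (((Finset.univ.filter (fun v => σ v = t)).card : ℝ) ^ 2 * φ t)
              - (((Finset.univ.filter (fun v => σ v = t)).card : ℝ) ^ 2) * T from by ring),
          Finset.sum_sub_distrib, ← Finset.mul_sum, ← Finset.sum_mul]
        ring

end AuxCounting

section AuxCounting2
open Finset

lemma sum_ch2_pick {n k : ℕ} (σ : Config n k) (t0 : Fin k) (φ : Fin k → ℝ) :
    ∑ b : Fin n × Fin n, φ (if σ b.1 = σ b.2 then σ b.1 else t0)
      = ∑ t, ((Finset.univ.filter (fun v => σ v = t)).card : ℝ) ^ 2 * φ t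
        + ((n : ℝ) ^ 2 - ∑ t, ((Finset.univ.filter (fun v => σ v = t)).card : ℝ) ^ 2) * φ t0 := by
  classical
  have expand : ∀ p : Fin n × Fin n, φ (if σ p.1 = σ p.2 then σ p.1 else t0)
      = (if σ p.1 = σ p.2 then φ (σ p.1) - φ t0 else 0) + φ t0 := by
    intro p; by_cases h : σ p.1 = σ p.2 <;> simp [h]
  rw [Finset.sum_congr rfl (fun p _ => expand p), Finset.sum_add_distrib,
    sum_pair_diag σ (fun t => φ t - φ t0), Finset.sum_const, Finset.card_univ,
    Fintype.card_prod, Fintype.card_fin, nsmul_eq_mul]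
  rw [Finset.sum_congr rfl (fun t _ => show
      ((Finset.univ.filter (fun v => σ v = t)).card : ℝ) ^ 2 * (φ t - φ t0)
        = ((Finset.univ.filter (fun v => σ v = t)).card : ℝ) ^ 2 * φ t
          - ((Finset.univ.filter (fun v => σ v = t)).card : ℝ) ^ 2 * φ t0 from by ring),
    Finset.sum_sub_distrib, ← Finset.sum_mul]
  push_cast
  ring

lemma cnt_cast {n k : ℕ} (hn : 0 < n) (σ : Config n k) (t : Fin k) :
    ((Finset.univ.filter (fun v => σ v = t)).card : ℝ) = (n : ℝ) * alphaFrac σ t := by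
  rw [alphaFrac]
  field_simp

lemma sum_cnt_sq {n k : ℕ} (hn : 0 < n) (σ : Config n k) :
    ∑ t, ((Finset.univ.filter (fun v => σ v = t)).card : ℝ) ^ 2
      = (n : ℝ) ^ 2 * gammaNorm σ := by
  rw [gammaNorm, Finset.mul_sum]
  exact Finset.sum_congr rfl fun t _ => by rw [cnt_cast hn]; ring

/-- Normalized 3-majority expectation formula. -/
lemma sum_maj3_phi {n k : ℕ} (hn : 0 < n) (σ : Config n k) (φ : Fin k → ℝ) :
    ∑ b : Fin n × Fin n × Fin n, φ (if σ b.1 = σ b.2.1 then σ b.1 else σ b.2.2)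
      = (n : ℝ) ^ 3 * ∑ t, (alphaFrac σ t ^ 2 + (1 - gammaNorm σ) * alphaFrac σ t) * φ t := by
  rw [sum_maj3_pick]
  have h1 : ∑ t, ((Finset.univ.filter (fun v => σ v = t)).card : ℝ) ^ 2 * φ t
      = (n : ℝ) ^ 2 * ∑ t, alphaFrac σ t ^ 2 * φ t := by
    rw [Finset.mul_sum]; exact Finset.sum_congr rfl fun t _ => by rw [cnt_cast hn]; ring
  have h2 : ∑ t, ((Finset.univ.filter (fun v => σ v = t)).card : ℝ) * φ t
      = (n : ℝ) * ∑ t, alphaFrac σ t * φ t := by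
    rw [Finset.mul_sum]; exact Finset.sum_congr rfl fun t _ => by rw [cnt_cast hn]; ring
  rw [h1, h2, sum_cnt_sq hn,
    Finset.sum_congr rfl (fun t _ => show
      (alphaFrac σ t ^ 2 + (1 - gammaNorm σ) * alphaFrac σ t) * φ t
        = alphaFrac σ t ^ 2 * φ t + (1 - gammaNorm σ) * (alphaFrac σ t * φ t) from by ring),
    Finset.sum_add_distrib, ← Finset.mul_sum]
  ring

/-- Normalized 2-choices expectation formula (else-branch opinion `t0`). -/
lemma sum_ch2_phi {n k : ℕ} (hn : 0 < n) (σ : Config n k) (t0 : Fin k) (φ : Fin k → ℝ) :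
    ∑ b : Fin n × Fin n, φ (if σ b.1 = σ b.2 then σ b.1 else t0)
      = (n : ℝ) ^ 2 * (∑ t, alphaFrac σ t ^ 2 * φ t + (1 - gammaNorm σ) * φ t0) := by
  rw [sum_ch2_pick]
  have h1 : ∑ t, ((Finset.univ.filter (fun v => σ v = t)).card : ℝ) ^ 2 * φ t
      = (n : ℝ) ^ 2 * ∑ t, alphaFrac σ t ^ 2 * φ t := by
    rw [Finset.mul_sum]; exact Finset.sum_congr rfl fun t _ => by rw [cnt_cast hn]; ring
  rw [h1, sum_cnt_sq hn]
  ring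

lemma alphaFrac_eq_sum {n k : ℕ} (τ : Config n k) (i : Fin k) :
    alphaFrac τ i = (∑ v, if τ v = i then (1 : ℝ) else 0) / n := by
  rw [alphaFrac, Finset.card_filter]
  push_cast
  rfl

end AuxCounting2

section AuxPi
open Finset

lemma sum_eval {n : ℕ} {B : Type*} [Fintype B] (v : Fin n) (F : B → ℝ) :
    (Fintype.card B : ℝ) * ∑ w : Fin n → B, F (w v)
      = (Fintype.card (Fin n → B) : ℝ) * ∑ b, F b := by
  classical
  have h1 : ∑ w : Fin n → B, F (w v) = ∑ p : B × ({j : Fin n // j ≠ v} → B), F p.1 := by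
    rw [← Equiv.sum_comp (Equiv.piSplitAt v (fun _ : Fin n => B)) (fun p => F p.1)]
    exact Finset.sum_congr rfl fun w _ => by simp [Equiv.piSplitAt_apply]
  have h2 : ∑ p : B × ({j : Fin n // j ≠ v} → B), F p.1
      = (Fintype.card ({j : Fin n // j ≠ v} → B) : ℝ) * ∑ b, F b := by
    rw [Fintype.sum_prod_type, Finset.mul_sum]
    exact Finset.sum_congr rfl fun b _ => by
      simp [Finset.sum_const, Finset.card_univ, mul_comm]
  have h3 : Fintype.card (Fin n → B)
      = Fintype.card B * Fintype.card ({j : Fin n // j ≠ v} → B) := by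
    rw [Fintype.card_congr (Equiv.piSplitAt v (fun _ : Fin n => B)), Fintype.card_prod]
  rw [h1, h2, h3]
  push_cast
  ring

variable {n k : ℕ} {B : Type*} [Fintype B] [MeasurableSpace B] [MeasurableSingletonClass B]

lemma integral_eq_sum_m (hB : 0 < Fintype.card B)
    (u : (Fin n → B) → Config n k) (F : Config n k → ℝ)
    (f : Fin n → B → ℝ) (m : Fin n → ℝ)
    (hFu : ∀ w, F (u w) = ∑ v, f v (w v))
    (hm : ∀ v, ∑ b, f v b = (Fintype.card B : ℝ) * m v) :
    ∫ τ, F τ ∂(Measure.map u (uniformOn (Fin n → B))) = ∑ v, m v := by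
  classical
  have hA : 0 < Fintype.card (Fin n → B) := by
    rw [Fintype.card_fun]; exact pow_pos hB _
  have hN0 : (Fintype.card B : ℝ) ≠ 0 := by
    exact_mod_cast hB.ne'
  have hA0 : (Fintype.card (Fin n → B) : ℝ) ≠ 0 := by positivity
  rw [integral_map (measurable_of_countable u).aemeasurable
    (measurable_of_countable F).aestronglyMeasurable, integral_uniformOn _ hA]
  have h1 : ∑ w : Fin n → B, F (u w) = ∑ v, ∑ w : Fin n → B, f v (w v) := by
    rw [Finset.sum_congr rfl (fun w _ => hFu w), Finset.sum_comm]
  have h2 : ∀ v : Fin n, ∑ w : Fin n → B, f v (w v)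
      = (Fintype.card (Fin n → B) : ℝ) * m v := by
    intro v
    have hse := sum_eval v (f v)
    rw [hm v] at hse
    apply mul_left_cancel₀ hN0
    rw [hse]
    ring
  rw [h1, Finset.sum_congr rfl (fun v _ => h2 v), ← Finset.mul_sum]
  field_simp

lemma lintegral_step_le (hB : 0 < Fintype.card B)
    (u : (Fin n → B) → Config n k) (G : Config n k → ℝ) (r : ℝ)
    (h : ∑ w : Fin n → B, Real.exp (G (u w))
      ≤ (Fintype.card (Fin n → B) : ℝ) * Real.exp r) :
    ∫⁻ τ, ENNReal.ofReal (Real.exp (G τ)) ∂(Measure.map u (uniformOn (Fin n → B)))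
      ≤ ENNReal.ofReal (Real.exp r) := by
  classical
  have hA : 0 < Fintype.card (Fin n → B) := by
    rw [Fintype.card_fun]; exact pow_pos hB _
  rw [lintegral_map (measurable_of_countable _) (measurable_of_countable u)]
  exact lintegral_uniformOn_le _ (fun w => (Real.exp_pos _).le) _ hA h

end AuxPi

section AuxFacts
open Finset

lemma sum_ite_split {k : ℕ} (i : Fin k) (F G : Fin k → ℝ) :
    ∑ t, (if t = i then F t else G t) = F i - G i + ∑ t, G t := by
  have : ∀ t, (if t = i then F t else G t) = (if t = i then F t - G t else 0) + G t := by
    intro t; split_ifs <;> ring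
  rw [Finset.sum_congr rfl fun t _ => this t, Finset.sum_add_distrib, Finset.sum_ite_eq']
  simp

lemma sum_ite_split2 {k : ℕ} {i j : Fin k} (hij : i ≠ j) (F G H : Fin k → ℝ) :
    ∑ t, (if t = i then F t else if t = j then G t else H t)
      = F i - H i + (G j - H j) + ∑ t, H t := by
  have : ∀ t, (if t = i then F t else if t = j then G t else H t)
      = (if t = i then F t - H t else 0) + ((if t = j then G t - H t else 0) + H t) := by
    intro t
    by_cases h1 : t = i
    · subst h1; simp [hij]
    · by_cases h2 : t = j <;> simp [h1, h2, Ne.symm hij]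
  rw [Finset.sum_congr rfl fun t _ => this t, Finset.sum_add_distrib, Finset.sum_ite_eq',
    Finset.sum_add_distrib, Finset.sum_ite_eq']
  simp
  ring

lemma alpha_facts {n k : ℕ} (hn : 0 < n) (σ : Config n k) :
    (∀ t, 0 ≤ alphaFrac σ t) ∧ (∑ t, alphaFrac σ t = 1) ∧ (∀ t, alphaFrac σ t ≤ 1)
      ∧ 0 ≤ gammaNorm σ ∧ gammaNorm σ ≤ 1 ∧ (∀ t, alphaFrac σ t ^ 2 ≤ gammaNorm σ) := by
  have hnR : (0:ℝ) < n := by exact_mod_cast hn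
  have h0 : ∀ t, 0 ≤ alphaFrac σ t := by
    intro t; rw [alphaFrac]; positivity
  have hsum : ∑ t, alphaFrac σ t = 1 := by
    have h := sum_comp_config σ (fun _ => (1:ℝ))
    simp only [mul_one, Finset.sum_const, Finset.card_univ, Fintype.card_fin,
      nsmul_eq_mul] at h
    have : ∑ t, alphaFrac σ t
        = (∑ t, ((Finset.univ.filter (fun v => σ v = t)).card : ℝ)) / n := by
      rw [Finset.sum_div]
      exact Finset.sum_congr rfl fun t _ => rfl
    rw [this, ← h, div_self hnR.ne']
  have h1 : ∀ t, alphaFrac σ t ≤ 1 := by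
    intro t
    calc alphaFrac σ t ≤ ∑ t', alphaFrac σ t' :=
          Finset.single_le_sum (fun t' _ => h0 t') (Finset.mem_univ t)
      _ = 1 := hsum
  have hg0 : 0 ≤ gammaNorm σ := Finset.sum_nonneg fun t _ => sq_nonneg _
  have hg1 : gammaNorm σ ≤ 1 := by
    rw [gammaNorm, ← hsum]
    exact Finset.sum_le_sum fun t _ => by nlinarith [h0 t, h1 t]
  have hag : ∀ t, alphaFrac σ t ^ 2 ≤ gammaNorm σ := by
    intro t
    rw [gammaNorm]
    exact Finset.single_le_sum (f := fun t' => alphaFrac σ t' ^ 2) (fun t' _ => sq_nonneg _) (Finset.mem_univ t)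
  exact ⟨h0, hsum, h1, hg0, hg1, hag⟩

/-- `q(1-q) ≤ a` for the 3-majority adoption probability `q = a² + (1-g)a`. -/
lemma q_var_bound {a g : ℝ} (ha0 : 0 ≤ a) (ha1 : a ≤ 1) (hag : a^2 ≤ g) (hg1 : g ≤ 1) :
    (a^2 + (1-g)*a) * (1 - (a^2 + (1-g)*a)) ≤ a := by
  set q : ℝ := a^2 + (1-g)*a with hq
  set Q : ℝ := a*(1+a-a^2) with hQ
  have hq0 : 0 ≤ q := by nlinarith
  have hqQ : q ≤ Q := by nlinarith
  rcases le_or_gt Q (1/2) with hc | hc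
  · have h1 : q*(1-q) ≤ Q*(1-Q) := by nlinarith
    have hkey : 0 ≤ 3 - a - 2*a^2 + a^3 := by nlinarith
    have h2 : Q*(1-Q) ≤ a := by
      nlinarith [mul_nonneg (mul_nonneg (mul_nonneg ha0 ha0) ha0) hkey]
    nlinarith
  · have h3 : Q ≤ 2*a := by nlinarith
    have h4 : q*(1-q) ≤ 1/4 := by nlinarith [sq_nonneg (q - 1/2)]
    nlinarith

end AuxFacts

section Parts
open Finset

lemma part_alpha_maj3 {n k : ℕ} (hn : 0 < n) (σ : Config n k) (i : Fin k) :
    BernsteinCond (maj3Step σ)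
      (fun τ => alphaFrac τ i - ∫ τ', alphaFrac τ' i ∂(maj3Step σ))
      (1 / n) (alphaFrac σ i / n) := by
  classical
  obtain ⟨ha0, hasum, ha1, hg0, hg1, hag⟩ := alpha_facts hn σ
  have hnR : (0:ℝ) < n := by exact_mod_cast hn
  have hcardB : (Fintype.card (Fin n × Fin n × Fin n) : ℝ) = (n:ℝ)^3 := by
    push_cast [Fintype.card_prod, Fintype.card_fin]; ring
  have hcardBpos : 0 < Fintype.card (Fin n × Fin n × Fin n) := by
    simp only [Fintype.card_prod, Fintype.card_fin]
    exact Nat.mul_pos hn (Nat.mul_pos hn hn)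
  set q : ℝ := alphaFrac σ i ^ 2 + (1 - gammaNorm σ) * alphaFrac σ i with hqdef
  have hq0 : 0 ≤ q := by nlinarith [ha0 i, hg1, hag i]
  have hq1 : q ≤ 1 := by nlinarith [ha0 i, ha1 i, hag i, hg0]
  have hEind : ∑ b : Fin n × Fin n × Fin n,
      (if (if σ b.1 = σ b.2.1 then σ b.1 else σ b.2.2) = i then (1:ℝ) else 0)
      = (n:ℝ)^3 * q := by
    rw [sum_maj3_phi hn σ (fun t => if t = i then (1:ℝ) else 0)]
    congr 1
    rw [show ∑ t, (alphaFrac σ t ^ 2 + (1 - gammaNorm σ) * alphaFrac σ t)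
          * (if t = i then (1:ℝ) else 0)
        = ∑ t, (if t = i then (alphaFrac σ t ^ 2 + (1 - gammaNorm σ) * alphaFrac σ t) else 0)
      from Finset.sum_congr rfl fun t _ => by split_ifs <;> ring, Finset.sum_ite_eq']
    simp [hqdef]
  have hC : (∫ τ', alphaFrac τ' i ∂(maj3Step σ)) = q := by
    rw [show maj3Step σ = Measure.map (maj3Update σ) (uniformOn (Maj3Seed n)) from rfl,
      integral_eq_sum_m hcardBpos (maj3Update σ) (fun τ => alphaFrac τ i)
        (fun _ b => (if (if σ b.1 = σ b.2.1 then σ b.1 else σ b.2.2) = i then (1:ℝ) else 0) / n)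
        (fun _ => q / n)
        (fun w => by
          show alphaFrac (maj3Update σ w) i = _
          rw [alphaFrac_eq_sum, Finset.sum_div]
          exact Finset.sum_congr rfl fun v _ => rfl)
        (fun v => by
          rw [← Finset.sum_div, hEind, hcardB]
          ring)]
    rw [Finset.sum_const, Finset.card_univ, Fintype.card_fin, nsmul_eq_mul]
    field_simp
  intro l hl
  apply lintegral_step_le hcardBpos (maj3Update σ)
    (fun τ => l * (alphaFrac τ i - ∫ τ', alphaFrac τ' i ∂(maj3Step σ)))
  have hcardA : (Fintype.card (Maj3Seed n) : ℝ)
      = (Fintype.card (Fin n × Fin n × Fin n) : ℝ)^n := by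
    rw [Fintype.card_fun, Fintype.card_fin]; push_cast; ring
  rw [hcardA]
  apply master_sum hcardBpos
    (fun _ b => ((if (if σ b.1 = σ b.2.1 then σ b.1 else σ b.2.2) = i then (1:ℝ) else 0) - q) / n)
    _ l (|l| * (1 / n)) (alphaFrac σ i / n) (by positivity) hl
    (mul_nonneg (sq_nonneg l) (div_nonneg (ha0 i) hnR.le)) (fun _ => 0)
  · -- hm
    intro v
    rw [← Finset.sum_div, Finset.sum_sub_distrib, hEind, Finset.sum_const, Finset.card_univ,
      hcardB]
    simp only [Fintype.card_prod, Fintype.card_fin, nsmul_eq_mul]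
    push_cast
    ring
  · -- hg (equality)
    intro w
    rw [← Finset.mul_sum]
    apply le_of_eq
    congr 1
    have h1 : alphaFrac (maj3Update σ w) i
        = ∑ v, (if (if σ (w v).1 = σ (w v).2.1 then σ (w v).1 else σ (w v).2.2) = i
            then (1:ℝ) else 0) / n := by
      rw [alphaFrac_eq_sum, Finset.sum_div]
      exact Finset.sum_congr rfl fun v _ => rfl
    show alphaFrac (maj3Update σ w) i - _ = _
    rw [hC, h1,
      Finset.sum_congr rfl (fun v _ => show
        ((if (if σ (w v).1 = σ (w v).2.1 then σ (w v).1 else σ (w v).2.2) = i then (1:ℝ) else 0) - q) / n - 0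
          = (if (if σ (w v).1 = σ (w v).2.1 then σ (w v).1 else σ (w v).2.2) = i then (1:ℝ) else 0) / n - q / n
        from by ring),
      Finset.sum_sub_distrib, Finset.sum_const, Finset.card_univ, Fintype.card_fin, nsmul_eq_mul]
    field_simp
  · -- hbd
    intro v b
    have hx : |((if (if σ b.1 = σ b.2.1 then σ b.1 else σ b.2.2) = i then (1:ℝ) else 0) - q) / n - 0|
        ≤ 1 / n := by
      rw [sub_zero, abs_div, abs_of_nonneg hnR.le]
      gcongr
      rw [abs_le]
      constructor <;> split_ifs <;> linarith
    calc l * (((if (if σ b.1 = σ b.2.1 then σ b.1 else σ b.2.2) = i then (1:ℝ) else 0) - q) / n - 0)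
        ≤ |l * (((if (if σ b.1 = σ b.2.1 then σ b.1 else σ b.2.2) = i then (1:ℝ) else 0) - q) / n - 0)| := le_abs_self _
      _ = |l| * |((if (if σ b.1 = σ b.2.1 then σ b.1 else σ b.2.2) = i then (1:ℝ) else 0) - q) / n - 0| := abs_mul _ _
      _ ≤ |l| * (1 / n) := mul_le_mul_of_nonneg_left hx (abs_nonneg l)
  · -- hvar
    have hinner : ∑ b : Fin n × Fin n × Fin n,
        ((if (if σ b.1 = σ b.2.1 then σ b.1 else σ b.2.2) = i then (1:ℝ) else 0) * (1 - 2*q) + q^2)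
        = (n:ℝ)^3 * (q*(1-q)) := by
      rw [Finset.sum_add_distrib, ← Finset.sum_mul, hEind, Finset.sum_const, Finset.card_univ]
      simp only [Fintype.card_prod, Fintype.card_fin, nsmul_eq_mul]
      push_cast; ring
    calc ∑ v : Fin n, ∑ b : Fin n × Fin n × Fin n,
          (l * (((if (if σ b.1 = σ b.2.1 then σ b.1 else σ b.2.2) = i then (1:ℝ) else 0) - q) / n - 0))^2
        = ∑ v : Fin n, l^2 * (((n:ℝ)^3 * (q*(1-q))) / n^2) := by
          refine Finset.sum_congr rfl fun v _ => ?_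
          rw [Finset.sum_congr rfl (fun b _ => show
            (l * (((if (if σ b.1 = σ b.2.1 then σ b.1 else σ b.2.2) = i then (1:ℝ) else 0) - q) / n - 0))^2
              = l^2 * (((if (if σ b.1 = σ b.2.1 then σ b.1 else σ b.2.2) = i then (1:ℝ) else 0) * (1 - 2*q) + q^2) / n^2)
            from by split_ifs <;> field_simp <;> ring), ← Finset.mul_sum, ← Finset.sum_div, hinner]
      _ = l^2 * (n:ℝ)^2 * (q*(1-q)) := by
          rw [Finset.sum_const, Finset.card_univ, Fintype.card_fin, nsmul_eq_mul]
          field_simp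
      _ ≤ l^2 * (n:ℝ)^2 * alphaFrac σ i := by
          apply mul_le_mul_of_nonneg_left _ (by positivity)
          exact q_var_bound (ha0 i) (ha1 i) (hag i) hg1
      _ = (Fintype.card (Fin n × Fin n × Fin n) : ℝ) * (l^2 * (alphaFrac σ i / n)) := by
          rw [hcardB]; field_simp

set_option maxHeartbeats 1000000 in
lemma part_alpha_ch2 {n k : ℕ} (hn : 0 < n) (σ : Config n k) (i : Fin k) :
    BernsteinCond (ch2Step σ)
      (fun τ => alphaFrac τ i - ∫ τ', alphaFrac τ' i ∂(ch2Step σ))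
      (1 / n) (alphaFrac σ i * (alphaFrac σ i + gammaNorm σ) / n) := by
  classical
  obtain ⟨ha0, hasum, ha1, hg0, hg1, hag⟩ := alpha_facts hn σ
  have hnR : (0:ℝ) < n := by exact_mod_cast hn
  have hcardB : (Fintype.card (Fin n × Fin n) : ℝ) = (n:ℝ)^2 := by
    push_cast [Fintype.card_prod, Fintype.card_fin]; ring
  have hcardBpos : 0 < Fintype.card (Fin n × Fin n) := by
    simp only [Fintype.card_prod, Fintype.card_fin]
    exact Nat.mul_pos hn hn
  set rfun : Fin k → ℝ :=
    fun t0 => alphaFrac σ i ^ 2 + (1 - gammaNorm σ) * (if t0 = i then 1 else 0) with hrdef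
  have hr0 : ∀ t0, 0 ≤ rfun t0 := by
    intro t0; simp only [hrdef]; split_ifs <;> nlinarith [ha0 i, sq_nonneg (alphaFrac σ i)]
  have hr1 : ∀ t0, rfun t0 ≤ 1 := by
    intro t0; simp only [hrdef]; split_ifs <;> nlinarith [hag i, ha1 i, ha0 i, hg0]
  have hEind : ∀ t0 : Fin k, ∑ b : Fin n × Fin n,
      (if (if σ b.1 = σ b.2 then σ b.1 else t0) = i then (1:ℝ) else 0)
      = (n:ℝ)^2 * rfun t0 := by
    intro t0
    rw [sum_ch2_phi hn σ t0 (fun t => if t = i then (1:ℝ) else 0)]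
    congr 1
    rw [show ∑ t, alphaFrac σ t ^ 2 * (if t = i then (1:ℝ) else 0)
        = ∑ t, (if t = i then alphaFrac σ t ^ 2 else 0)
      from Finset.sum_congr rfl fun t _ => by split_ifs <;> ring, Finset.sum_ite_eq']
    simp [hrdef]
  have hC : (∫ τ', alphaFrac τ' i ∂(ch2Step σ)) = ∑ v : Fin n, rfun (σ v) / n := by
    rw [show ch2Step σ = Measure.map (ch2Update σ) (uniformOn (Ch2Seed n)) from rfl,
      integral_eq_sum_m hcardBpos (ch2Update σ) (fun τ => alphaFrac τ i)
        (fun v b => (if (if σ b.1 = σ b.2 then σ b.1 else σ v) = i then (1:ℝ) else 0) / n)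
        (fun v => rfun (σ v) / n)
        (fun w => by
          show alphaFrac (ch2Update σ w) i = _
          rw [alphaFrac_eq_sum, Finset.sum_div]
          exact Finset.sum_congr rfl fun v _ => rfl)
        (fun v => by
          rw [← Finset.sum_div, hEind (σ v), hcardB]
          ring)]
  intro l hl
  apply lintegral_step_le hcardBpos (ch2Update σ)
    (fun τ => l * (alphaFrac τ i - ∫ τ', alphaFrac τ' i ∂(ch2Step σ)))
  have hcardA : (Fintype.card (Ch2Seed n) : ℝ)
      = (Fintype.card (Fin n × Fin n) : ℝ)^n := by
    rw [Fintype.card_fun, Fintype.card_fin]; push_cast; ring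
  rw [hcardA]
  apply master_sum hcardBpos
    (fun v b => ((if (if σ b.1 = σ b.2 then σ b.1 else σ v) = i then (1:ℝ) else 0) - rfun (σ v)) / n)
    _ l (|l| * (1 / n)) (alphaFrac σ i * (alphaFrac σ i + gammaNorm σ) / n) (by positivity) hl
    (mul_nonneg (sq_nonneg l) (div_nonneg
      (mul_nonneg (ha0 i) (add_nonneg (ha0 i) hg0)) hnR.le)) (fun _ => 0)
  · -- hm
    intro v
    rw [← Finset.sum_div, Finset.sum_sub_distrib, hEind (σ v), Finset.sum_const,
      Finset.card_univ, hcardB]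
    simp only [Fintype.card_prod, Fintype.card_fin, nsmul_eq_mul]
    push_cast
    ring
  · -- hg (equality)
    intro w
    rw [← Finset.mul_sum]
    apply le_of_eq
    congr 1
    have h1 : alphaFrac (ch2Update σ w) i
        = ∑ v, (if (if σ (w v).1 = σ (w v).2 then σ (w v).1 else σ v) = i
            then (1:ℝ) else 0) / n := by
      rw [alphaFrac_eq_sum, Finset.sum_div]
      exact Finset.sum_congr rfl fun v _ => rfl
    show alphaFrac (ch2Update σ w) i - _ = _
    rw [hC, h1, ← Finset.sum_sub_distrib]
    refine Finset.sum_congr rfl fun v _ => ?_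
    ring
  · -- hbd
    intro v b
    have hx : |((if (if σ b.1 = σ b.2 then σ b.1 else σ v) = i then (1:ℝ) else 0) - rfun (σ v)) / n - 0|
        ≤ 1 / n := by
      rw [sub_zero, abs_div, abs_of_nonneg hnR.le]
      gcongr
      rw [abs_le]
      constructor <;> split_ifs <;> nlinarith [hr0 (σ v), hr1 (σ v)]
    calc l * (((if (if σ b.1 = σ b.2 then σ b.1 else σ v) = i then (1:ℝ) else 0) - rfun (σ v)) / n - 0)
        ≤ |l * (((if (if σ b.1 = σ b.2 then σ b.1 else σ v) = i then (1:ℝ) else 0) - rfun (σ v)) / n - 0)| := le_abs_self _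
      _ = |l| * |((if (if σ b.1 = σ b.2 then σ b.1 else σ v) = i then (1:ℝ) else 0) - rfun (σ v)) / n - 0| := abs_mul _ _
      _ ≤ |l| * (1 / n) := mul_le_mul_of_nonneg_left hx (abs_nonneg l)
  · -- hvar
    have hinner : ∀ v : Fin n, ∑ b : Fin n × Fin n,
        (l * (((if (if σ b.1 = σ b.2 then σ b.1 else σ v) = i then (1:ℝ) else 0) - rfun (σ v)) / n - 0))^2
        = l^2 * (rfun (σ v) * (1 - rfun (σ v))) := by
      intro v
      rw [Finset.sum_congr rfl (fun b _ => show
        (l * (((if (if σ b.1 = σ b.2 then σ b.1 else σ v) = i then (1:ℝ) else 0) - rfun (σ v)) / n - 0))^2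
          = l^2 * (((if (if σ b.1 = σ b.2 then σ b.1 else σ v) = i then (1:ℝ) else 0) * (1 - 2*rfun (σ v)) + rfun (σ v)^2) / n^2)
        from by split_ifs <;> field_simp <;> ring), ← Finset.mul_sum, ← Finset.sum_div,
        Finset.sum_add_distrib, ← Finset.sum_mul, hEind (σ v), Finset.sum_const, Finset.card_univ]
      simp only [Fintype.card_prod, Fintype.card_fin, nsmul_eq_mul]
      push_cast
      field_simp
      ring
    have hkey : ∑ t, alphaFrac σ t * (rfun t * (1 - rfun t))
        ≤ alphaFrac σ i * (alphaFrac σ i + gammaNorm σ) := by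
      have hpt : ∀ t, alphaFrac σ t * (rfun t * (1 - rfun t))
          = if t = i then alphaFrac σ t * ((alphaFrac σ i^2 + (1 - gammaNorm σ)) * (1 - (alphaFrac σ i^2 + (1 - gammaNorm σ))))
            else alphaFrac σ t * (alphaFrac σ i^2 * (1 - alphaFrac σ i^2)) := by
        intro t; simp only [hrdef]; split_ifs <;> ring
      rw [Finset.sum_congr rfl fun t _ => hpt t, sum_ite_split, ← Finset.sum_mul, hasum, one_mul]
      set A := alphaFrac σ i with hA
      set g := gammaNorm σ with hg
      have hX1le : (A^2 + (1 - g)) * (1 - (A^2 + (1 - g))) ≤ g - A^2 := by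
        nlinarith [sq_nonneg (g - A^2)]
      have h2 : A * ((A^2 + (1 - g)) * (1 - (A^2 + (1 - g)))) ≤ A * (g - A^2) :=
        mul_le_mul_of_nonneg_left hX1le (ha0 i)
      have hA3 : 0 ≤ A^3 := pow_nonneg (ha0 i) 3
      have h4 : A^2 * (1 - A^2) - A * (A^2 * (1 - A^2)) ≤ A^2 := by
        nlinarith [mul_nonneg hA3 (show (0:ℝ) ≤ 1 + A - A^2 by nlinarith [ha0 i, ha1 i])]
      nlinarith [h2, h4, hA3]
    calc ∑ v : Fin n, ∑ b : Fin n × Fin n,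
          (l * (((if (if σ b.1 = σ b.2 then σ b.1 else σ v) = i then (1:ℝ) else 0) - rfun (σ v)) / n - 0))^2
        = l^2 * ∑ v : Fin n, (fun t => rfun t * (1 - rfun t)) (σ v) := by
          rw [Finset.mul_sum]
          exact Finset.sum_congr rfl fun v _ => hinner v
      _ = l^2 * ∑ t, ((Finset.univ.filter (fun v => σ v = t)).card : ℝ) * (rfun t * (1 - rfun t)) := by
          rw [sum_comp_config σ (fun t => rfun t * (1 - rfun t))]
      _ = l^2 * ((n:ℝ) * ∑ t, alphaFrac σ t * (rfun t * (1 - rfun t))) := by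
          congr 1
          rw [Finset.mul_sum]
          exact Finset.sum_congr rfl fun t _ => by rw [cnt_cast hn]; ring
      _ ≤ l^2 * ((n:ℝ) * (alphaFrac σ i * (alphaFrac σ i + gammaNorm σ))) := by
          apply mul_le_mul_of_nonneg_left _ (sq_nonneg l)
          exact mul_le_mul_of_nonneg_left hkey hnR.le
      _ = (Fintype.card (Fin n × Fin n) : ℝ) * (l^2 * (alphaFrac σ i * (alphaFrac σ i + gammaNorm σ) / n)) := by
          rw [hcardB]; field_simp

lemma ind_sq_identity {α : Type*} [DecidableEq α] {i j : α} (hij : i ≠ j) (p : α)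
    (d l nn : ℝ) (hnn : nn ≠ 0) :
    (l * ((((if p = i then (1:ℝ) else 0) - (if p = j then (1:ℝ) else 0)) - d) / nn - 0))^2
      = l^2 * ((((if p = i then (1:ℝ) else 0) + (if p = j then (1:ℝ) else 0))
          - 2*d*((if p = i then (1:ℝ) else 0) - (if p = j then (1:ℝ) else 0)) + d^2) / nn^2) := by
  by_cases h1 : p = i <;> by_cases h2 : p = j
  · exact absurd (h1.symm.trans h2) hij
  all_goals simp only [h1, h2, if_true, if_false, if_neg hij, if_neg (Ne.symm hij)]
  all_goals field_simp
  all_goals ring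

set_option maxHeartbeats 2000000 in
lemma part_delta_maj3 {n k : ℕ} (hn : 0 < n) (σ : Config n k) {i j : Fin k} (hij : i ≠ j) :
    BernsteinCond (maj3Step σ)
      (fun τ => (alphaFrac τ i - alphaFrac τ j) -
        ∫ τ', (alphaFrac τ' i - alphaFrac τ' j) ∂(maj3Step σ))
      (2 / n) (2 / n * (alphaFrac σ i + alphaFrac σ j)) := by
  classical
  obtain ⟨ha0, hasum, ha1, hg0, hg1, hag⟩ := alpha_facts hn σ
  have hnR : (0:ℝ) < n := by exact_mod_cast hn
  have hcardB : (Fintype.card (Fin n × Fin n × Fin n) : ℝ) = (n:ℝ)^3 := by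
    push_cast [Fintype.card_prod, Fintype.card_fin]; ring
  have hcardBpos : 0 < Fintype.card (Fin n × Fin n × Fin n) := by
    simp only [Fintype.card_prod, Fintype.card_fin]
    exact Nat.mul_pos hn (Nat.mul_pos hn hn)
  have hEind : ∀ i' : Fin k, ∑ b : Fin n × Fin n × Fin n,
      (if (if σ b.1 = σ b.2.1 then σ b.1 else σ b.2.2) = i' then (1:ℝ) else 0)
      = (n:ℝ)^3 * (alphaFrac σ i' ^ 2 + (1 - gammaNorm σ) * alphaFrac σ i') := by
    intro i'
    rw [sum_maj3_phi hn σ (fun t => if t = i' then (1:ℝ) else 0)]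
    congr 1
    rw [show ∑ t, (alphaFrac σ t ^ 2 + (1 - gammaNorm σ) * alphaFrac σ t)
          * (if t = i' then (1:ℝ) else 0)
        = ∑ t, (if t = i' then (alphaFrac σ t ^ 2 + (1 - gammaNorm σ) * alphaFrac σ t) else 0)
      from Finset.sum_congr rfl fun t _ => by split_ifs <;> ring, Finset.sum_ite_eq']
    simp
  set qi : ℝ := alphaFrac σ i ^ 2 + (1 - gammaNorm σ) * alphaFrac σ i with hqidef
  set qj : ℝ := alphaFrac σ j ^ 2 + (1 - gammaNorm σ) * alphaFrac σ j with hqjdef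
  have hqi0 : 0 ≤ qi := by nlinarith [ha0 i, hg1, hag i]
  have hqi1 : qi ≤ 1 := by nlinarith [ha0 i, ha1 i, hag i, hg0]
  have hqj0 : 0 ≤ qj := by nlinarith [ha0 j, hg1, hag j]
  have hqj1 : qj ≤ 1 := by nlinarith [ha0 j, ha1 j, hag j, hg0]
  have hC : (∫ τ', (alphaFrac τ' i - alphaFrac τ' j) ∂(maj3Step σ)) = qi - qj := by
    rw [show maj3Step σ = Measure.map (maj3Update σ) (uniformOn (Maj3Seed n)) from rfl,
      integral_eq_sum_m hcardBpos (maj3Update σ) (fun τ => alphaFrac τ i - alphaFrac τ j)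
        (fun _ b => ((if (if σ b.1 = σ b.2.1 then σ b.1 else σ b.2.2) = i then (1:ℝ) else 0)
          - (if (if σ b.1 = σ b.2.1 then σ b.1 else σ b.2.2) = j then (1:ℝ) else 0)) / n)
        (fun _ => (qi - qj) / n)
        (fun w => by
          show alphaFrac (maj3Update σ w) i - alphaFrac (maj3Update σ w) j = _
          rw [alphaFrac_eq_sum, alphaFrac_eq_sum, div_sub_div_same, ← Finset.sum_sub_distrib,
            Finset.sum_div]
          exact Finset.sum_congr rfl fun v _ => rfl)
        (fun v => by
          rw [← Finset.sum_div, Finset.sum_sub_distrib, hEind i, hEind j, hcardB]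
          ring)]
    rw [Finset.sum_const, Finset.card_univ, Fintype.card_fin, nsmul_eq_mul]
    field_simp
  intro l hl
  apply lintegral_step_le hcardBpos (maj3Update σ)
    (fun τ => l * ((alphaFrac τ i - alphaFrac τ j)
      - ∫ τ', (alphaFrac τ' i - alphaFrac τ' j) ∂(maj3Step σ)))
  have hcardA : (Fintype.card (Maj3Seed n) : ℝ)
      = (Fintype.card (Fin n × Fin n × Fin n) : ℝ)^n := by
    rw [Fintype.card_fun, Fintype.card_fin]; push_cast; ring
  rw [hcardA]
  apply master_sum hcardBpos
    (fun _ b => (((if (if σ b.1 = σ b.2.1 then σ b.1 else σ b.2.2) = i then (1:ℝ) else 0)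
      - (if (if σ b.1 = σ b.2.1 then σ b.1 else σ b.2.2) = j then (1:ℝ) else 0)) - (qi - qj)) / n)
    _ l (|l| * (2 / n)) (2 / n * (alphaFrac σ i + alphaFrac σ j)) (by positivity) hl
    (mul_nonneg (sq_nonneg l) (mul_nonneg (by positivity)
      (add_nonneg (ha0 i) (ha0 j)))) (fun _ => 0)
  · -- hm
    intro v
    rw [← Finset.sum_div, Finset.sum_sub_distrib, Finset.sum_sub_distrib, hEind i, hEind j,
      Finset.sum_const, Finset.card_univ, hcardB]
    simp only [Fintype.card_prod, Fintype.card_fin, nsmul_eq_mul]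
    push_cast
    ring
  · -- hg (equality)
    intro w
    rw [← Finset.mul_sum]
    apply le_of_eq
    congr 1
    have h1 : alphaFrac (maj3Update σ w) i - alphaFrac (maj3Update σ w) j
        = ∑ v, ((if (if σ (w v).1 = σ (w v).2.1 then σ (w v).1 else σ (w v).2.2) = i
            then (1:ℝ) else 0)
          - (if (if σ (w v).1 = σ (w v).2.1 then σ (w v).1 else σ (w v).2.2) = j
            then (1:ℝ) else 0)) / n := by
      rw [alphaFrac_eq_sum, alphaFrac_eq_sum, div_sub_div_same, ← Finset.sum_sub_distrib,
        Finset.sum_div]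
      exact Finset.sum_congr rfl fun v _ => rfl
    show alphaFrac (maj3Update σ w) i - alphaFrac (maj3Update σ w) j - _ = _
    rw [hC, h1,
      Finset.sum_congr rfl (fun v _ => show
        (((if (if σ (w v).1 = σ (w v).2.1 then σ (w v).1 else σ (w v).2.2) = i then (1:ℝ) else 0)
          - (if (if σ (w v).1 = σ (w v).2.1 then σ (w v).1 else σ (w v).2.2) = j then (1:ℝ) else 0)) - (qi - qj)) / n - 0
          = ((if (if σ (w v).1 = σ (w v).2.1 then σ (w v).1 else σ (w v).2.2) = i then (1:ℝ) else 0)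
          - (if (if σ (w v).1 = σ (w v).2.1 then σ (w v).1 else σ (w v).2.2) = j then (1:ℝ) else 0)) / n - (qi - qj) / n
        from by ring),
      Finset.sum_sub_distrib, Finset.sum_const, Finset.card_univ, Fintype.card_fin, nsmul_eq_mul]
    field_simp
  · -- hbd
    intro v b
    have hx : |(((if (if σ b.1 = σ b.2.1 then σ b.1 else σ b.2.2) = i then (1:ℝ) else 0)
        - (if (if σ b.1 = σ b.2.1 then σ b.1 else σ b.2.2) = j then (1:ℝ) else 0)) - (qi - qj)) / n - 0|
        ≤ 2 / n := by
      rw [sub_zero, abs_div, abs_of_nonneg hnR.le]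
      gcongr
      rw [abs_le]
      constructor <;> split_ifs <;> linarith
    calc l * ((((if (if σ b.1 = σ b.2.1 then σ b.1 else σ b.2.2) = i then (1:ℝ) else 0)
          - (if (if σ b.1 = σ b.2.1 then σ b.1 else σ b.2.2) = j then (1:ℝ) else 0)) - (qi - qj)) / n - 0)
        ≤ |l * ((((if (if σ b.1 = σ b.2.1 then σ b.1 else σ b.2.2) = i then (1:ℝ) else 0)
          - (if (if σ b.1 = σ b.2.1 then σ b.1 else σ b.2.2) = j then (1:ℝ) else 0)) - (qi - qj)) / n - 0)| := le_abs_self _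
      _ = |l| * |(((if (if σ b.1 = σ b.2.1 then σ b.1 else σ b.2.2) = i then (1:ℝ) else 0)
          - (if (if σ b.1 = σ b.2.1 then σ b.1 else σ b.2.2) = j then (1:ℝ) else 0)) - (qi - qj)) / n - 0| := abs_mul _ _
      _ ≤ |l| * (2 / n) := mul_le_mul_of_nonneg_left hx (abs_nonneg l)
  · -- hvar
    have hsq : ∀ b : Fin n × Fin n × Fin n,
        (l * ((((if (if σ b.1 = σ b.2.1 then σ b.1 else σ b.2.2) = i then (1:ℝ) else 0)
          - (if (if σ b.1 = σ b.2.1 then σ b.1 else σ b.2.2) = j then (1:ℝ) else 0)) - (qi - qj)) / n - 0))^2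
        = l^2 * ((((if (if σ b.1 = σ b.2.1 then σ b.1 else σ b.2.2) = i then (1:ℝ) else 0)
            + (if (if σ b.1 = σ b.2.1 then σ b.1 else σ b.2.2) = j then (1:ℝ) else 0))
          - 2*(qi - qj)*((if (if σ b.1 = σ b.2.1 then σ b.1 else σ b.2.2) = i then (1:ℝ) else 0)
            - (if (if σ b.1 = σ b.2.1 then σ b.1 else σ b.2.2) = j then (1:ℝ) else 0))
          + (qi - qj)^2) / n^2) := by
      intro b
      exact ind_sq_identity hij _ (qi - qj) l n hnR.ne'
    have hinner : ∑ b : Fin n × Fin n × Fin n,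
        ((((if (if σ b.1 = σ b.2.1 then σ b.1 else σ b.2.2) = i then (1:ℝ) else 0)
            + (if (if σ b.1 = σ b.2.1 then σ b.1 else σ b.2.2) = j then (1:ℝ) else 0))
          - 2*(qi - qj)*((if (if σ b.1 = σ b.2.1 then σ b.1 else σ b.2.2) = i then (1:ℝ) else 0)
            - (if (if σ b.1 = σ b.2.1 then σ b.1 else σ b.2.2) = j then (1:ℝ) else 0))
          + (qi - qj)^2))
        = (n:ℝ)^3 * ((qi + qj) - (qi - qj)^2) := by
      rw [Finset.sum_add_distrib, Finset.sum_sub_distrib, Finset.sum_add_distrib,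
        ← Finset.mul_sum, Finset.sum_sub_distrib, hEind i, hEind j,
        Finset.sum_const, Finset.card_univ]
      simp only [Fintype.card_prod, Fintype.card_fin, nsmul_eq_mul]
      push_cast
      ring
    calc ∑ v : Fin n, ∑ b : Fin n × Fin n × Fin n,
          (l * ((((if (if σ b.1 = σ b.2.1 then σ b.1 else σ b.2.2) = i then (1:ℝ) else 0)
            - (if (if σ b.1 = σ b.2.1 then σ b.1 else σ b.2.2) = j then (1:ℝ) else 0)) - (qi - qj)) / n - 0))^2
        = ∑ v : Fin n, l^2 * (((n:ℝ)^3 * ((qi + qj) - (qi - qj)^2)) / n^2) := by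
          refine Finset.sum_congr rfl fun v _ => ?_
          rw [Finset.sum_congr rfl (fun b _ => hsq b), ← Finset.mul_sum, ← Finset.sum_div, hinner]
      _ = l^2 * (n:ℝ)^2 * ((qi + qj) - (qi - qj)^2) := by
          rw [Finset.sum_const, Finset.card_univ, Fintype.card_fin, nsmul_eq_mul]
          field_simp
      _ ≤ l^2 * (n:ℝ)^2 * (2 * (alphaFrac σ i + alphaFrac σ j)) := by
          apply mul_le_mul_of_nonneg_left _ (by positivity)
          nlinarith [sq_nonneg (qi - qj), ha0 i, ha0 j, ha1 i, ha1 j, hg0, hg1, hag i, hag j,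
            mul_nonneg (ha0 i) hg0, mul_nonneg (ha0 j) hg0,
            mul_nonneg (ha0 i) (sub_nonneg.2 (ha1 i)), mul_nonneg (ha0 j) (sub_nonneg.2 (ha1 j))]
      _ = (Fintype.card (Fin n × Fin n × Fin n) : ℝ) * (l^2 * (2 / n * (alphaFrac σ i + alphaFrac σ j))) := by
          rw [hcardB]; field_simp

set_option maxHeartbeats 2000000 in
lemma part_delta_ch2 {n k : ℕ} (hn : 0 < n) (σ : Config n k) {i j : Fin k} (hij : i ≠ j) :
    BernsteinCond (ch2Step σ)
      (fun τ => (alphaFrac τ i - alphaFrac τ j) -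
        ∫ τ', (alphaFrac τ' i - alphaFrac τ' j) ∂(ch2Step σ))
      (2 / n) (1 / n * (alphaFrac σ i + alphaFrac σ j) *
        (alphaFrac σ i + alphaFrac σ j + gammaNorm σ)) := by
  classical
  obtain ⟨ha0, hasum, ha1, hg0, hg1, hag⟩ := alpha_facts hn σ
  have hnR : (0:ℝ) < n := by exact_mod_cast hn
  have hcardB : (Fintype.card (Fin n × Fin n) : ℝ) = (n:ℝ)^2 := by
    push_cast [Fintype.card_prod, Fintype.card_fin]; ring
  have hcardBpos : 0 < Fintype.card (Fin n × Fin n) := by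
    simp only [Fintype.card_prod, Fintype.card_fin]
    exact Nat.mul_pos hn hn
  have hxy1 : alphaFrac σ i + alphaFrac σ j ≤ 1 := by
    rw [← hasum, ← Finset.sum_pair hij]
    exact Finset.sum_le_sum_of_subset_of_nonneg (Finset.subset_univ _)
      (fun t _ _ => ha0 t)
  have hEind : ∀ (t0 i' : Fin k), ∑ b : Fin n × Fin n,
      (if (if σ b.1 = σ b.2 then σ b.1 else t0) = i' then (1:ℝ) else 0)
      = (n:ℝ)^2 * (alphaFrac σ i' ^ 2 + (1 - gammaNorm σ) * (if t0 = i' then 1 else 0)) := by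
    intro t0 i'
    rw [sum_ch2_phi hn σ t0 (fun t => if t = i' then (1:ℝ) else 0)]
    congr 1
    rw [show ∑ t, alphaFrac σ t ^ 2 * (if t = i' then (1:ℝ) else 0)
        = ∑ t, (if t = i' then alphaFrac σ t ^ 2 else 0)
      from Finset.sum_congr rfl fun t _ => by split_ifs <;> ring, Finset.sum_ite_eq']
    simp
  set rfi : Fin k → ℝ :=
    fun t0 => alphaFrac σ i ^ 2 + (1 - gammaNorm σ) * (if t0 = i then 1 else 0) with hrfi
  set rfj : Fin k → ℝ :=
    fun t0 => alphaFrac σ j ^ 2 + (1 - gammaNorm σ) * (if t0 = j then 1 else 0) with hrfj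
  have hri0 : ∀ t0, 0 ≤ rfi t0 := by
    intro t0; simp only [hrfi]; split_ifs <;> nlinarith [ha0 i, sq_nonneg (alphaFrac σ i)]
  have hri1 : ∀ t0, rfi t0 ≤ 1 := by
    intro t0; simp only [hrfi]; split_ifs <;> nlinarith [hag i, ha1 i, ha0 i, hg0]
  have hrj0 : ∀ t0, 0 ≤ rfj t0 := by
    intro t0; simp only [hrfj]; split_ifs <;> nlinarith [ha0 j, sq_nonneg (alphaFrac σ j)]
  have hrj1 : ∀ t0, rfj t0 ≤ 1 := by
    intro t0; simp only [hrfj]; split_ifs <;> nlinarith [hag j, ha1 j, ha0 j, hg0]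
  have hC : (∫ τ', (alphaFrac τ' i - alphaFrac τ' j) ∂(ch2Step σ))
      = ∑ v : Fin n, (rfi (σ v) - rfj (σ v)) / n := by
    rw [show ch2Step σ = Measure.map (ch2Update σ) (uniformOn (Ch2Seed n)) from rfl,
      integral_eq_sum_m hcardBpos (ch2Update σ) (fun τ => alphaFrac τ i - alphaFrac τ j)
        (fun v b => ((if (if σ b.1 = σ b.2 then σ b.1 else σ v) = i then (1:ℝ) else 0)
          - (if (if σ b.1 = σ b.2 then σ b.1 else σ v) = j then (1:ℝ) else 0)) / n)
        (fun v => (rfi (σ v) - rfj (σ v)) / n)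
        (fun w => by
          show alphaFrac (ch2Update σ w) i - alphaFrac (ch2Update σ w) j = _
          rw [alphaFrac_eq_sum, alphaFrac_eq_sum, div_sub_div_same, ← Finset.sum_sub_distrib,
            Finset.sum_div]
          exact Finset.sum_congr rfl fun v _ => rfl)
        (fun v => by
          rw [← Finset.sum_div, Finset.sum_sub_distrib, hEind (σ v) i, hEind (σ v) j, hcardB]
          simp only [hrfi, hrfj]
          ring)]
  intro l hl
  apply lintegral_step_le hcardBpos (ch2Update σ)
    (fun τ => l * ((alphaFrac τ i - alphaFrac τ j)
      - ∫ τ', (alphaFrac τ' i - alphaFrac τ' j) ∂(ch2Step σ)))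
  have hcardA : (Fintype.card (Ch2Seed n) : ℝ)
      = (Fintype.card (Fin n × Fin n) : ℝ)^n := by
    rw [Fintype.card_fun, Fintype.card_fin]; push_cast; ring
  rw [hcardA]
  apply master_sum hcardBpos
    (fun v b => (((if (if σ b.1 = σ b.2 then σ b.1 else σ v) = i then (1:ℝ) else 0)
      - (if (if σ b.1 = σ b.2 then σ b.1 else σ v) = j then (1:ℝ) else 0))
      - (rfi (σ v) - rfj (σ v))) / n)
    _ l (|l| * (2 / n))
    (1 / n * (alphaFrac σ i + alphaFrac σ j) * (alphaFrac σ i + alphaFrac σ j + gammaNorm σ))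
    (by positivity) hl
    (mul_nonneg (sq_nonneg l) (mul_nonneg (mul_nonneg (by positivity)
      (add_nonneg (ha0 i) (ha0 j)))
      (add_nonneg (add_nonneg (ha0 i) (ha0 j)) hg0))) (fun _ => 0)
  · -- hm
    intro v
    rw [← Finset.sum_div, Finset.sum_sub_distrib, Finset.sum_sub_distrib,
      hEind (σ v) i, hEind (σ v) j, Finset.sum_const, Finset.card_univ, hcardB]
    simp only [Fintype.card_prod, Fintype.card_fin, nsmul_eq_mul, hrfi, hrfj]
    push_cast
    ring
  · -- hg (equality)
    intro w
    rw [← Finset.mul_sum]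
    apply le_of_eq
    congr 1
    have h1 : alphaFrac (ch2Update σ w) i - alphaFrac (ch2Update σ w) j
        = ∑ v, ((if (if σ (w v).1 = σ (w v).2 then σ (w v).1 else σ v) = i then (1:ℝ) else 0)
          - (if (if σ (w v).1 = σ (w v).2 then σ (w v).1 else σ v) = j then (1:ℝ) else 0)) / n := by
      rw [alphaFrac_eq_sum, alphaFrac_eq_sum, div_sub_div_same, ← Finset.sum_sub_distrib,
        Finset.sum_div]
      exact Finset.sum_congr rfl fun v _ => rfl
    show alphaFrac (ch2Update σ w) i - alphaFrac (ch2Update σ w) j - _ = _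
    rw [hC, h1, ← Finset.sum_sub_distrib]
    refine Finset.sum_congr rfl fun v _ => ?_
    ring
  · -- hbd
    intro v b
    have hx : |(((if (if σ b.1 = σ b.2 then σ b.1 else σ v) = i then (1:ℝ) else 0)
        - (if (if σ b.1 = σ b.2 then σ b.1 else σ v) = j then (1:ℝ) else 0))
        - (rfi (σ v) - rfj (σ v))) / n - 0| ≤ 2 / n := by
      rw [sub_zero, abs_div, abs_of_nonneg hnR.le]
      gcongr
      rw [abs_le]
      constructor <;> split_ifs <;>
        nlinarith [hri0 (σ v), hri1 (σ v), hrj0 (σ v), hrj1 (σ v)]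
    calc l * ((((if (if σ b.1 = σ b.2 then σ b.1 else σ v) = i then (1:ℝ) else 0)
          - (if (if σ b.1 = σ b.2 then σ b.1 else σ v) = j then (1:ℝ) else 0))
          - (rfi (σ v) - rfj (σ v))) / n - 0)
        ≤ |l * ((((if (if σ b.1 = σ b.2 then σ b.1 else σ v) = i then (1:ℝ) else 0)
          - (if (if σ b.1 = σ b.2 then σ b.1 else σ v) = j then (1:ℝ) else 0))
          - (rfi (σ v) - rfj (σ v))) / n - 0)| := le_abs_self _
      _ = |l| * |(((if (if σ b.1 = σ b.2 then σ b.1 else σ v) = i then (1:ℝ) else 0)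
          - (if (if σ b.1 = σ b.2 then σ b.1 else σ v) = j then (1:ℝ) else 0))
          - (rfi (σ v) - rfj (σ v))) / n - 0| := abs_mul _ _
      _ ≤ |l| * (2 / n) := mul_le_mul_of_nonneg_left hx (abs_nonneg l)
  · -- hvar
    have hinner : ∀ v : Fin n, ∑ b : Fin n × Fin n,
        (l * ((((if (if σ b.1 = σ b.2 then σ b.1 else σ v) = i then (1:ℝ) else 0)
          - (if (if σ b.1 = σ b.2 then σ b.1 else σ v) = j then (1:ℝ) else 0))
          - (rfi (σ v) - rfj (σ v))) / n - 0))^2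
        = l^2 * ((rfi (σ v) + rfj (σ v)) - (rfi (σ v) - rfj (σ v))^2) := by
      intro v
      rw [Finset.sum_congr rfl (fun b _ =>
        ind_sq_identity hij _ (rfi (σ v) - rfj (σ v)) l n hnR.ne'),
        ← Finset.mul_sum, ← Finset.sum_div, Finset.sum_add_distrib, Finset.sum_sub_distrib,
        Finset.sum_add_distrib, ← Finset.mul_sum, Finset.sum_sub_distrib,
        hEind (σ v) i, hEind (σ v) j, Finset.sum_const, Finset.card_univ]
      simp only [Fintype.card_prod, Fintype.card_fin, nsmul_eq_mul, hrfi, hrfj]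
      push_cast
      field_simp
      ring
    have hptb : ∀ t, (rfi t + rfj t) - (rfi t - rfj t)^2
        ≤ (if t = i then gammaNorm σ - alphaFrac σ i^2 + 3*alphaFrac σ j^2
          else if t = j then gammaNorm σ - alphaFrac σ j^2 + 3*alphaFrac σ i^2
          else alphaFrac σ i^2 + alphaFrac σ j^2) := by
      intro t
      by_cases h1 : t = i <;> by_cases h2 : t = j
      · exact absurd (h1.symm.trans h2) hij
      all_goals simp only [hrfi, hrfj, h1, h2, if_true, if_false,
        if_neg hij, if_neg (Ne.symm hij)]
      · nlinarith [sq_nonneg (alphaFrac σ i^2 + (1 - gammaNorm σ) - alphaFrac σ j^2 - 1)]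
      · nlinarith [sq_nonneg (alphaFrac σ i^2 - (1 - gammaNorm σ) - alphaFrac σ j^2 + 1)]
      · nlinarith [sq_nonneg (alphaFrac σ i^2 - alphaFrac σ j^2)]
    have hkey : ∑ t, alphaFrac σ t * ((rfi t + rfj t) - (rfi t - rfj t)^2)
        ≤ (alphaFrac σ i + alphaFrac σ j) * (alphaFrac σ i + alphaFrac σ j + gammaNorm σ) := by
      calc ∑ t, alphaFrac σ t * ((rfi t + rfj t) - (rfi t - rfj t)^2)
          ≤ ∑ t, alphaFrac σ t * (if t = i then gammaNorm σ - alphaFrac σ i^2 + 3*alphaFrac σ j^2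
              else if t = j then gammaNorm σ - alphaFrac σ j^2 + 3*alphaFrac σ i^2
              else alphaFrac σ i^2 + alphaFrac σ j^2) :=
            Finset.sum_le_sum fun t _ => mul_le_mul_of_nonneg_left (hptb t) (ha0 t)
        _ = ∑ t, (if t = i then alphaFrac σ t * (gammaNorm σ - alphaFrac σ i^2 + 3*alphaFrac σ j^2)
              else if t = j then alphaFrac σ t * (gammaNorm σ - alphaFrac σ j^2 + 3*alphaFrac σ i^2)
              else alphaFrac σ t * (alphaFrac σ i^2 + alphaFrac σ j^2)) := by
            refine Finset.sum_congr rfl fun t _ => ?_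
            split_ifs <;> ring
        _ ≤ (alphaFrac σ i + alphaFrac σ j) * (alphaFrac σ i + alphaFrac σ j + gammaNorm σ) := by
            rw [sum_ite_split2 hij, ← Finset.sum_mul, hasum, one_mul]
            nlinarith [mul_nonneg (mul_nonneg (ha0 i) (ha0 j)) (sub_nonneg.2 hxy1),
              pow_nonneg (ha0 i) 3, pow_nonneg (ha0 j) 3, ha0 i, ha0 j]
    calc ∑ v : Fin n, ∑ b : Fin n × Fin n,
          (l * ((((if (if σ b.1 = σ b.2 then σ b.1 else σ v) = i then (1:ℝ) else 0)
            - (if (if σ b.1 = σ b.2 then σ b.1 else σ v) = j then (1:ℝ) else 0))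
            - (rfi (σ v) - rfj (σ v))) / n - 0))^2
        = l^2 * ∑ v : Fin n, (fun t => (rfi t + rfj t) - (rfi t - rfj t)^2) (σ v) := by
          rw [Finset.mul_sum]
          exact Finset.sum_congr rfl fun v _ => hinner v
      _ = l^2 * ∑ t, ((Finset.univ.filter (fun v => σ v = t)).card : ℝ)
            * ((rfi t + rfj t) - (rfi t - rfj t)^2) := by
          rw [sum_comp_config σ (fun t => (rfi t + rfj t) - (rfi t - rfj t)^2)]
      _ = l^2 * ((n:ℝ) * ∑ t, alphaFrac σ t * ((rfi t + rfj t) - (rfi t - rfj t)^2)) := by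
          congr 1
          rw [Finset.mul_sum]
          exact Finset.sum_congr rfl fun t _ => by rw [cnt_cast hn]; ring
      _ ≤ l^2 * ((n:ℝ) * ((alphaFrac σ i + alphaFrac σ j)
            * (alphaFrac σ i + alphaFrac σ j + gammaNorm σ))) := by
          apply mul_le_mul_of_nonneg_left _ (sq_nonneg l)
          exact mul_le_mul_of_nonneg_left hkey hnR.le
      _ = (Fintype.card (Fin n × Fin n) : ℝ) * (l^2 * (1 / n * (alphaFrac σ i + alphaFrac σ j)
            * (alphaFrac σ i + alphaFrac σ j + gammaNorm σ))) := by
          rw [hcardB]; field_simp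

/-- Common facts for part (iii). -/
lemma gamma_facts {n k : ℕ} (hn : 0 < n) (σ : Config n k) :
    Real.sqrt (gammaNorm σ)^2 = gammaNorm σ ∧ 0 ≤ Real.sqrt (gammaNorm σ)
      ∧ Real.sqrt (gammaNorm σ) ≤ 1 ∧ (∀ t, alphaFrac σ t ≤ Real.sqrt (gammaNorm σ))
      ∧ Real.sqrt (gammaNorm σ)^2 * Real.sqrt (gammaNorm σ)^2 ≤ ∑ t, alphaFrac σ t ^ 3
      ∧ (∑ t, alphaFrac σ t ^ 3) ≤ Real.sqrt (gammaNorm σ) * (Real.sqrt (gammaNorm σ)^2)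
      ∧ (∑ t, alphaFrac σ t ^ 4) ≤ Real.sqrt (gammaNorm σ) * ∑ t, alphaFrac σ t ^ 3
      ∧ 0 ≤ ∑ t, alphaFrac σ t ^ 3 := by
  obtain ⟨ha0, hasum, ha1, hg0, hg1, hag⟩ := alpha_facts hn σ
  set u := Real.sqrt (gammaNorm σ) with hudef
  set S3 := ∑ t, alphaFrac σ t ^ 3 with hS3def
  set S4 := ∑ t, alphaFrac σ t ^ 4 with hS4def
  have hu2 : u^2 = gammaNorm σ := Real.sq_sqrt hg0
  have hu0 : 0 ≤ u := Real.sqrt_nonneg _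
  have hu1 : u ≤ 1 := by
    rw [show (1:ℝ) = Real.sqrt 1 from (Real.sqrt_one).symm]
    exact Real.sqrt_le_sqrt hg1
  have hau : ∀ t, alphaFrac σ t ≤ u := by
    intro t
    rw [show alphaFrac σ t = Real.sqrt (alphaFrac σ t ^ 2) from (Real.sqrt_sq (ha0 t)).symm]
    exact Real.sqrt_le_sqrt (hag t)
  have hS30 : 0 ≤ S3 := Finset.sum_nonneg fun t _ => pow_nonneg (ha0 t) 3
  have hCS : u^2 * u^2 ≤ S3 := by
    have h := Finset.sum_mul_sq_le_sq_mul_sq Finset.univ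
      (fun t => alphaFrac σ t * Real.sqrt (alphaFrac σ t))
      (fun t => Real.sqrt (alphaFrac σ t))
    have e1 : ∀ t, (alphaFrac σ t * Real.sqrt (alphaFrac σ t)) * Real.sqrt (alphaFrac σ t)
        = alphaFrac σ t ^ 2 := by
      intro t
      rw [mul_assoc, Real.mul_self_sqrt (ha0 t)]
      ring
    have e2 : ∀ t, (alphaFrac σ t * Real.sqrt (alphaFrac σ t))^2 = alphaFrac σ t ^ 3 := by
      intro t
      rw [mul_pow, Real.sq_sqrt (ha0 t)]
      ring
    have e3 : ∀ t, (Real.sqrt (alphaFrac σ t))^2 = alphaFrac σ t := fun t => Real.sq_sqrt (ha0 t)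
    rw [Finset.sum_congr rfl fun t _ => e1 t, Finset.sum_congr rfl fun t _ => e2 t,
      Finset.sum_congr rfl fun t _ => e3 t, hasum, mul_one] at h
    calc u^2 * u^2 = gammaNorm σ ^ 2 := by rw [hu2]; ring
      _ ≤ S3 := by
          have : gammaNorm σ = ∑ t, alphaFrac σ t ^ 2 := rfl
          rw [this]
          exact h
  have hS3u : S3 ≤ u * u^2 := by
    rw [hu2]
    calc S3 ≤ ∑ t, u * alphaFrac σ t ^ 2 := by
          apply Finset.sum_le_sum
          intro t _
          calc alphaFrac σ t ^ 3 = alphaFrac σ t * alphaFrac σ t ^ 2 := by ring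
            _ ≤ u * alphaFrac σ t ^ 2 := mul_le_mul_of_nonneg_right (hau t) (sq_nonneg _)
      _ = u * gammaNorm σ := by rw [← Finset.mul_sum]; rfl
  have hS4u : S4 ≤ u * S3 := by
    calc S4 ≤ ∑ t, u * alphaFrac σ t ^ 3 := by
          apply Finset.sum_le_sum
          intro t _
          calc alphaFrac σ t ^ 4 = alphaFrac σ t * alphaFrac σ t ^ 3 := by ring
            _ ≤ u * alphaFrac σ t ^ 3 := mul_le_mul_of_nonneg_right (hau t)
                (pow_nonneg (ha0 t) 3)
      _ = u * S3 := by rw [← Finset.mul_sum]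
  exact ⟨hu2, hu0, hu1, hau, hCS, hS3u, hS4u, hS30⟩

lemma gamma32_eq {x : ℝ} (hx : 0 ≤ x) : x ^ (3/2 : ℝ) = Real.sqrt x ^ 3 := by
  rw [show (3/2 : ℝ) = (1/2) * 3 by norm_num, Real.rpow_mul hx,
    show ((3:ℝ)) = ((3:ℕ):ℝ) by norm_num, Real.rpow_natCast, ← Real.sqrt_eq_rpow]

/-- Inner product bound: `2⟨α_τ, α_σ⟩ ≤ γ_σ + γ_τ`. -/
lemma ip_bound {n k : ℕ} (σ τ : Config n k) :
    2 * ∑ t, alphaFrac τ t * alphaFrac σ t ≤ gammaNorm σ + gammaNorm τ := by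
  have h : 0 ≤ ∑ t, (alphaFrac σ t - alphaFrac τ t)^2 :=
    Finset.sum_nonneg fun t _ => sq_nonneg _
  have e : ∑ t, (alphaFrac σ t - alphaFrac τ t)^2
      = gammaNorm σ + gammaNorm τ - 2 * ∑ t, alphaFrac τ t * alphaFrac σ t := by
    rw [gammaNorm, gammaNorm, ← Finset.sum_add_distrib, Finset.mul_sum,
      ← Finset.sum_sub_distrib]
    exact Finset.sum_congr rfl fun t _ => by ring
  linarith [e ▸ h]

/-- `∑_v ψ(τ v) = n ∑_t α_τ(t) ψ(t)`. -/
lemma sum_comp_alpha {n k : ℕ} (hn : 0 < n) (τ : Config n k) (ψ : Fin k → ℝ) :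
    ∑ v : Fin n, ψ (τ v) = (n : ℝ) * ∑ t, alphaFrac τ t * ψ t := by
  rw [sum_comp_config τ ψ, Finset.mul_sum]
  exact Finset.sum_congr rfl fun t _ => by rw [cnt_cast hn]; ring

set_option maxHeartbeats 2000000 in
lemma part_gamma_maj3 {n k : ℕ} (hn : 0 < n) (σ : Config n k) :
    OneSidedBernsteinCond (maj3Step σ) (fun τ => gammaNorm σ - gammaNorm τ)
      (2 * Real.sqrt (gammaNorm σ) / n) (4 * gammaNorm σ ^ (3/2 : ℝ) / n) := by
  classical
  obtain ⟨ha0, hasum, ha1, hg0, hg1, hag⟩ := alpha_facts hn σ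
  obtain ⟨hu2, hu0, hu1, hau, hCS, hS3u, hS4u, hS30⟩ := gamma_facts hn σ
  have hnR : (0:ℝ) < n := by exact_mod_cast hn
  have hcardB : (Fintype.card (Fin n × Fin n × Fin n) : ℝ) = (n:ℝ)^3 := by
    push_cast [Fintype.card_prod, Fintype.card_fin]; ring
  have hcardBpos : 0 < Fintype.card (Fin n × Fin n × Fin n) := by
    simp only [Fintype.card_prod, Fintype.card_fin]
    exact Nat.mul_pos hn (Nat.mul_pos hn hn)
  set u := Real.sqrt (gammaNorm σ) with hudef
  set S3 := ∑ t, alphaFrac σ t ^ 3 with hS3def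
  set S4 := ∑ t, alphaFrac σ t ^ 4 with hS4def
  set M : ℝ := S3 + (1 - gammaNorm σ) * gammaNorm σ with hMdef
  set M2 : ℝ := S4 + (1 - gammaNorm σ) * S3 with hM2def
  have hMγ : gammaNorm σ ≤ M := by rw [hMdef]; nlinarith [hCS, hu2]
  have hMu : M ≤ u := by
    rw [hMdef]
    nlinarith [hS3u, hu2, hu0, hu1,
      mul_nonneg (mul_nonneg hu0 (sub_nonneg.2 hu1))
        (sub_nonneg.2 (show u^2 ≤ 1 by nlinarith))]
  have hM0 : 0 ≤ M := le_trans hg0 hMγ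
  have hEa : ∑ b : Fin n × Fin n × Fin n,
      alphaFrac σ (if σ b.1 = σ b.2.1 then σ b.1 else σ b.2.2) = (n:ℝ)^3 * M := by
    rw [sum_maj3_phi hn σ (fun t => alphaFrac σ t)]
    congr 1
    rw [Finset.sum_congr rfl (fun t _ => show
        (alphaFrac σ t ^ 2 + (1 - gammaNorm σ) * alphaFrac σ t) * alphaFrac σ t
          = alphaFrac σ t ^ 3 + (1 - gammaNorm σ) * alphaFrac σ t ^ 2 from by ring),
      Finset.sum_add_distrib, ← Finset.mul_sum]
    rfl
  have hEa2 : ∑ b : Fin n × Fin n × Fin n,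
      (alphaFrac σ (if σ b.1 = σ b.2.1 then σ b.1 else σ b.2.2))^2 = (n:ℝ)^3 * M2 := by
    rw [sum_maj3_phi hn σ (fun t => alphaFrac σ t ^ 2)]
    congr 1
    rw [Finset.sum_congr rfl (fun t _ => show
        (alphaFrac σ t ^ 2 + (1 - gammaNorm σ) * alphaFrac σ t) * alphaFrac σ t ^ 2
          = alphaFrac σ t ^ 4 + (1 - gammaNorm σ) * alphaFrac σ t ^ 3 from by ring),
      Finset.sum_add_distrib, ← Finset.mul_sum]
  intro l hl0 hl
  apply lintegral_step_le hcardBpos (maj3Update σ)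
    (fun τ => l * (gammaNorm σ - gammaNorm τ))
  have hcardA : (Fintype.card (Maj3Seed n) : ℝ)
      = (Fintype.card (Fin n × Fin n × Fin n) : ℝ)^n := by
    rw [Fintype.card_fun, Fintype.card_fin]; push_cast; ring
  rw [hcardA]
  apply master_sum hcardBpos
    (fun _ b => 2 / n * (M - alphaFrac σ (if σ b.1 = σ b.2.1 then σ b.1 else σ b.2.2)))
    _ l (l * (2 * Real.sqrt (gammaNorm σ) / n)) (4 * gammaNorm σ ^ (3/2 : ℝ) / n)
    (mul_nonneg hl0 (by positivity)) hl
    (mul_nonneg (sq_nonneg l) (div_nonneg (mul_nonneg (by norm_num)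
      (Real.rpow_nonneg hg0 _)) hnR.le)) (fun _ => 0)
  · -- hm
    intro v
    rw [← Finset.mul_sum, Finset.sum_sub_distrib, hEa, Finset.sum_const, Finset.card_univ]
    simp only [Fintype.card_prod, Fintype.card_fin, nsmul_eq_mul]
    push_cast
    ring
  · -- hg
    intro w
    have key : gammaNorm σ - gammaNorm (maj3Update σ w)
        ≤ ∑ v, (2 / n * (M - alphaFrac σ (maj3Update σ w v))) := by
      have h1 : ∑ v, (2 / (n:ℝ) * (M - alphaFrac σ (maj3Update σ w v)))
          = 2*M - 2*∑ t, alphaFrac (maj3Update σ w) t * alphaFrac σ t := by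
        rw [← Finset.mul_sum, Finset.sum_sub_distrib, Finset.sum_const, Finset.card_univ,
          Fintype.card_fin, nsmul_eq_mul,
          sum_comp_alpha hn (maj3Update σ w) (fun t => alphaFrac σ t)]
        field_simp
      have h2 := ip_bound σ (maj3Update σ w)
      rw [h1]
      linarith
    show l * (gammaNorm σ - gammaNorm (maj3Update σ w)) ≤ _
    calc l * (gammaNorm σ - gammaNorm (maj3Update σ w))
        ≤ l * ∑ v, (2 / (n:ℝ) * (M - alphaFrac σ (maj3Update σ w v))) :=
          mul_le_mul_of_nonneg_left key hl0
      _ = ∑ v : Fin n, l * (2 / (n:ℝ)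
            * (M - alphaFrac σ (if σ (w v).1 = σ (w v).2.1 then σ (w v).1 else σ (w v).2.2)) - 0) := by
          rw [Finset.mul_sum]
          refine Finset.sum_congr rfl fun v _ => ?_
          rw [sub_zero]
          rfl
  · -- hbd
    intro v b
    rw [sub_zero]
    have hf : 2 / (n:ℝ) * (M - alphaFrac σ (if σ b.1 = σ b.2.1 then σ b.1 else σ b.2.2))
        ≤ 2 * u / n := by
      have h1 : M - alphaFrac σ (if σ b.1 = σ b.2.1 then σ b.1 else σ b.2.2) ≤ u := by
        have := ha0 (if σ b.1 = σ b.2.1 then σ b.1 else σ b.2.2)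
        linarith [hMu]
      calc 2 / (n:ℝ) * (M - alphaFrac σ (if σ b.1 = σ b.2.1 then σ b.1 else σ b.2.2))
          ≤ 2 / (n:ℝ) * u := mul_le_mul_of_nonneg_left h1 (by positivity)
        _ = 2 * u / n := by ring
    exact mul_le_mul_of_nonneg_left hf hl0
  · -- hvar
    have hsq : ∀ b : Fin n × Fin n × Fin n,
        (l * (2 / (n:ℝ) * (M - alphaFrac σ (if σ b.1 = σ b.2.1 then σ b.1 else σ b.2.2)) - 0))^2
          = (l^2 * (4/n^2)) * (M^2
            - 2*M*(alphaFrac σ (if σ b.1 = σ b.2.1 then σ b.1 else σ b.2.2))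
            + (alphaFrac σ (if σ b.1 = σ b.2.1 then σ b.1 else σ b.2.2))^2) := by
      intro b
      field_simp
      ring
    have hinner : ∑ b : Fin n × Fin n × Fin n,
        (M^2 - 2*M*(alphaFrac σ (if σ b.1 = σ b.2.1 then σ b.1 else σ b.2.2))
          + (alphaFrac σ (if σ b.1 = σ b.2.1 then σ b.1 else σ b.2.2))^2)
        = (n:ℝ)^3 * (M2 - M^2) := by
      rw [Finset.sum_add_distrib, Finset.sum_sub_distrib, ← Finset.mul_sum, hEa, hEa2,
        Finset.sum_const, Finset.card_univ]
      simp only [Fintype.card_prod, Fintype.card_fin, nsmul_eq_mul]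
      push_cast
      ring
    have hvarb : M2 - M^2 ≤ u^3 := by
      rw [hM2def]
      nlinarith [hS4u, hS3u, hMγ, hu2, hu0, hu1, hS30, hM0, hMγ,
        mul_nonneg (mul_nonneg hu0 hu0) hu0,
        mul_nonneg (sub_nonneg.2 hS3u) (sub_nonneg.2 hu1),
        mul_le_mul hMγ hMγ hg0 hM0]
    calc ∑ v : Fin n, ∑ b : Fin n × Fin n × Fin n,
          (l * (2 / (n:ℝ) * (M - alphaFrac σ (if σ b.1 = σ b.2.1 then σ b.1 else σ b.2.2)) - 0))^2
        = ∑ v : Fin n, (l^2 * (4/n^2)) * ((n:ℝ)^3 * (M2 - M^2)) := by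
          refine Finset.sum_congr rfl fun v _ => ?_
          rw [Finset.sum_congr rfl (fun b _ => hsq b), ← Finset.mul_sum, hinner]
      _ = l^2 * (4 * (n:ℝ)^2) * (M2 - M^2) := by
          rw [Finset.sum_const, Finset.card_univ, Fintype.card_fin, nsmul_eq_mul]
          field_simp
      _ ≤ l^2 * (4 * (n:ℝ)^2) * u^3 := by
          apply mul_le_mul_of_nonneg_left hvarb (by positivity)
      _ = (Fintype.card (Fin n × Fin n × Fin n) : ℝ)
            * (l^2 * (4 * gammaNorm σ ^ (3/2 : ℝ) / n)) := by
          rw [hcardB, gamma32_eq hg0]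
          field_simp
          ring

set_option maxHeartbeats 2000000 in
lemma part_gamma_ch2 {n k : ℕ} (hn : 0 < n) (σ : Config n k) :
    OneSidedBernsteinCond (ch2Step σ) (fun τ => gammaNorm σ - gammaNorm τ)
      (2 * Real.sqrt (gammaNorm σ) / n) (8 * gammaNorm σ ^ 2 / n) := by
  classical
  obtain ⟨ha0, hasum, ha1, hg0, hg1, hag⟩ := alpha_facts hn σ
  obtain ⟨hu2, hu0, hu1, hau, hCS, hS3u, hS4u, hS30⟩ := gamma_facts hn σ
  have hnR : (0:ℝ) < n := by exact_mod_cast hn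
  have hcardB : (Fintype.card (Fin n × Fin n) : ℝ) = (n:ℝ)^2 := by
    push_cast [Fintype.card_prod, Fintype.card_fin]; ring
  have hcardBpos : 0 < Fintype.card (Fin n × Fin n) := by
    simp only [Fintype.card_prod, Fintype.card_fin]
    exact Nat.mul_pos hn hn
  set u := Real.sqrt (gammaNorm σ) with hudef
  set S3 := ∑ t, alphaFrac σ t ^ 3 with hS3def
  set S4 := ∑ t, alphaFrac σ t ^ 4 with hS4def
  set M : ℝ := S3 + (1 - gammaNorm σ) * gammaNorm σ with hMdef
  have hMγ : gammaNorm σ ≤ M := by rw [hMdef]; nlinarith [hCS, hu2]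
  have hEa : ∀ t0 : Fin k, ∑ b : Fin n × Fin n,
      alphaFrac σ (if σ b.1 = σ b.2 then σ b.1 else t0)
      = (n:ℝ)^2 * (S3 + (1 - gammaNorm σ) * alphaFrac σ t0) := by
    intro t0
    rw [sum_ch2_phi hn σ t0 (fun t => alphaFrac σ t),
      show (∑ t, alphaFrac σ t ^ 2 * alphaFrac σ t) = S3 from by
        rw [hS3def]; exact Finset.sum_congr rfl fun t _ => by ring]
  have hEa2 : ∀ t0 : Fin k, ∑ b : Fin n × Fin n,
      (alphaFrac σ (if σ b.1 = σ b.2 then σ b.1 else t0))^2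
      = (n:ℝ)^2 * (S4 + (1 - gammaNorm σ) * alphaFrac σ t0 ^ 2) := by
    intro t0
    rw [sum_ch2_phi hn σ t0 (fun t => alphaFrac σ t ^ 2),
      show (∑ t, alphaFrac σ t ^ 2 * alphaFrac σ t ^ 2) = S4 from by
        rw [hS4def]; exact Finset.sum_congr rfl fun t _ => by ring]
  have hμ0 : ∀ t0, 0 ≤ S3 + (1 - gammaNorm σ) * alphaFrac σ t0 := by
    intro t0
    have := mul_nonneg (sub_nonneg.2 hg1) (ha0 t0)
    linarith [hS30]
  have hμu : ∀ t0, S3 + (1 - gammaNorm σ) * alphaFrac σ t0 ≤ u := by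
    intro t0
    have h1 : (1 - gammaNorm σ) * alphaFrac σ t0 ≤ (1 - gammaNorm σ) * u :=
      mul_le_mul_of_nonneg_left (hau t0) (sub_nonneg.2 hg1)
    nlinarith [hS3u, hu2, hu0]
  have hv2 : ∑ v : Fin n, (alphaFrac σ (σ v))^2 = (n:ℝ) * S3 := by
    rw [sum_comp_alpha hn σ (fun t => alphaFrac σ t ^ 2),
      show (∑ t, alphaFrac σ t * alphaFrac σ t ^ 2) = S3 from by
        rw [hS3def]; exact Finset.sum_congr rfl fun t _ => by ring]
  have hμsum : ∑ v : Fin n, (S3 + (1 - gammaNorm σ) * alphaFrac σ (σ v)) = (n:ℝ) * M := by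
    rw [Finset.sum_add_distrib, Finset.sum_const, Finset.card_univ, Fintype.card_fin,
      nsmul_eq_mul, ← Finset.mul_sum, sum_comp_alpha hn σ (fun t => alphaFrac σ t)]
    rw [show ∑ t, alphaFrac σ t * alphaFrac σ t = gammaNorm σ from
      Finset.sum_congr rfl fun t _ => by ring]
    rw [hMdef]
    ring
  intro l hl0 hl
  apply lintegral_step_le hcardBpos (ch2Update σ)
    (fun τ => l * (gammaNorm σ - gammaNorm τ))
  have hcardA : (Fintype.card (Ch2Seed n) : ℝ)
      = (Fintype.card (Fin n × Fin n) : ℝ)^n := by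
    rw [Fintype.card_fun, Fintype.card_fin]; push_cast; ring
  rw [hcardA]
  apply master_sum hcardBpos
    (fun v b => 2 / n * ((S3 + (1 - gammaNorm σ) * alphaFrac σ (σ v))
      - alphaFrac σ (if σ b.1 = σ b.2 then σ b.1 else σ v)))
    _ l (l * (2 * Real.sqrt (gammaNorm σ) / n)) (8 * gammaNorm σ ^ 2 / n)
    (mul_nonneg hl0 (by positivity)) hl
    (mul_nonneg (sq_nonneg l) (div_nonneg (mul_nonneg (by norm_num) (sq_nonneg _)) hnR.le))
    (fun _ => 0)
  · -- hm
    intro v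
    rw [← Finset.mul_sum, Finset.sum_sub_distrib, hEa (σ v), Finset.sum_const,
      Finset.card_univ]
    simp only [Fintype.card_prod, Fintype.card_fin, nsmul_eq_mul]
    push_cast
    ring
  · -- hg
    intro w
    have key : gammaNorm σ - gammaNorm (ch2Update σ w)
        ≤ ∑ v, (2 / n * ((S3 + (1 - gammaNorm σ) * alphaFrac σ (σ v))
            - alphaFrac σ (ch2Update σ w v))) := by
      have h1 : ∑ v, (2 / (n:ℝ) * ((S3 + (1 - gammaNorm σ) * alphaFrac σ (σ v))
            - alphaFrac σ (ch2Update σ w v)))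
          = 2*M - 2*∑ t, alphaFrac (ch2Update σ w) t * alphaFrac σ t := by
        rw [← Finset.mul_sum, Finset.sum_sub_distrib, hμsum,
          sum_comp_alpha hn (ch2Update σ w) (fun t => alphaFrac σ t)]
        field_simp
      have h2 := ip_bound σ (ch2Update σ w)
      rw [h1]
      linarith
    show l * (gammaNorm σ - gammaNorm (ch2Update σ w)) ≤ _
    calc l * (gammaNorm σ - gammaNorm (ch2Update σ w))
        ≤ l * ∑ v, (2 / (n:ℝ) * ((S3 + (1 - gammaNorm σ) * alphaFrac σ (σ v))
            - alphaFrac σ (ch2Update σ w v))) := mul_le_mul_of_nonneg_left key hl0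
      _ = ∑ v : Fin n, l * (2 / (n:ℝ) * ((S3 + (1 - gammaNorm σ) * alphaFrac σ (σ v))
            - alphaFrac σ (if σ (w v).1 = σ (w v).2 then σ (w v).1 else σ v)) - 0) := by
          rw [Finset.mul_sum]
          refine Finset.sum_congr rfl fun v _ => ?_
          rw [sub_zero]
          rfl
  · -- hbd
    intro v b
    rw [sub_zero]
    have hf : 2 / (n:ℝ) * ((S3 + (1 - gammaNorm σ) * alphaFrac σ (σ v))
        - alphaFrac σ (if σ b.1 = σ b.2 then σ b.1 else σ v)) ≤ 2 * u / n := by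
      have h1 : (S3 + (1 - gammaNorm σ) * alphaFrac σ (σ v))
          - alphaFrac σ (if σ b.1 = σ b.2 then σ b.1 else σ v) ≤ u := by
        have := ha0 (if σ b.1 = σ b.2 then σ b.1 else σ v)
        linarith [hμu (σ v)]
      calc 2 / (n:ℝ) * ((S3 + (1 - gammaNorm σ) * alphaFrac σ (σ v))
            - alphaFrac σ (if σ b.1 = σ b.2 then σ b.1 else σ v))
          ≤ 2 / (n:ℝ) * u := mul_le_mul_of_nonneg_left h1 (by positivity)
        _ = 2 * u / n := by ring
    exact mul_le_mul_of_nonneg_left hf hl0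
  · -- hvar
    have hsq : ∀ (v : Fin n) (b : Fin n × Fin n),
        (l * (2 / (n:ℝ) * ((S3 + (1 - gammaNorm σ) * alphaFrac σ (σ v))
          - alphaFrac σ (if σ b.1 = σ b.2 then σ b.1 else σ v)) - 0))^2
          = (l^2 * (4/n^2)) * ((S3 + (1 - gammaNorm σ) * alphaFrac σ (σ v))^2
            - 2*(S3 + (1 - gammaNorm σ) * alphaFrac σ (σ v))
                *(alphaFrac σ (if σ b.1 = σ b.2 then σ b.1 else σ v))
            + (alphaFrac σ (if σ b.1 = σ b.2 then σ b.1 else σ v))^2) := by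
      intro v b
      field_simp
      ring
    have hinner : ∀ v : Fin n, ∑ b : Fin n × Fin n,
        ((S3 + (1 - gammaNorm σ) * alphaFrac σ (σ v))^2
          - 2*(S3 + (1 - gammaNorm σ) * alphaFrac σ (σ v))
              *(alphaFrac σ (if σ b.1 = σ b.2 then σ b.1 else σ v))
          + (alphaFrac σ (if σ b.1 = σ b.2 then σ b.1 else σ v))^2)
        = (n:ℝ)^2 * ((S4 + (1 - gammaNorm σ) * alphaFrac σ (σ v)^2)
            - (S3 + (1 - gammaNorm σ) * alphaFrac σ (σ v))^2) := by
      intro v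
      rw [Finset.sum_add_distrib, Finset.sum_sub_distrib, ← Finset.mul_sum, hEa (σ v),
        hEa2 (σ v), Finset.sum_const, Finset.card_univ]
      simp only [Fintype.card_prod, Fintype.card_fin, nsmul_eq_mul]
      push_cast
      ring
    have hfin : S4 + gammaNorm σ * (1 - gammaNorm σ) * S3 ≤ 2 * gammaNorm σ ^ 2 := by
      nlinarith [mul_le_mul_of_nonneg_left hS3u hu0,
        mul_le_mul_of_nonneg_left hS3u (mul_nonneg hu0 hu0),
        mul_nonneg (mul_nonneg hu0 hu0) hS30, hu2, hu0, hu1, hS4u, hS30, hg0, hg1,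
        mul_nonneg (mul_nonneg (mul_nonneg (mul_nonneg hu0 hu0) (mul_nonneg hu0 hu0)) hu0)
          (sub_nonneg.2 hu1)]
    calc ∑ v : Fin n, ∑ b : Fin n × Fin n,
          (l * (2 / (n:ℝ) * ((S3 + (1 - gammaNorm σ) * alphaFrac σ (σ v))
            - alphaFrac σ (if σ b.1 = σ b.2 then σ b.1 else σ v)) - 0))^2
        = ∑ v : Fin n, (l^2 * (4/n^2)) * ((n:ℝ)^2 * ((S4 + (1 - gammaNorm σ) * alphaFrac σ (σ v)^2)
            - (S3 + (1 - gammaNorm σ) * alphaFrac σ (σ v))^2)) := by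
          refine Finset.sum_congr rfl fun v _ => ?_
          rw [Finset.sum_congr rfl (fun b _ => hsq v b), ← Finset.mul_sum, hinner v]
      _ ≤ ∑ v : Fin n, (l^2 * (4/n^2)) * ((n:ℝ)^2 * (S4 + gammaNorm σ * (1 - gammaNorm σ)
            * alphaFrac σ (σ v)^2)) := by
          apply Finset.sum_le_sum
          intro v _
          apply mul_le_mul_of_nonneg_left _ (by positivity)
          apply mul_le_mul_of_nonneg_left _ (by positivity)
          have hge : ((1 - gammaNorm σ) * alphaFrac σ (σ v))^2
              ≤ (S3 + (1 - gammaNorm σ) * alphaFrac σ (σ v))^2 := by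
            apply sq_le_sq'
            · nlinarith [hμ0 (σ v), mul_nonneg (sub_nonneg.2 hg1) (ha0 (σ v))]
            · nlinarith [hS30]
          nlinarith [hge]
      _ = (l^2 * 4) * ((n:ℝ) * S4 + gammaNorm σ * (1 - gammaNorm σ) * ((n:ℝ) * S3)) := by
          rw [Finset.sum_congr rfl (fun v _ => show
            (l^2 * (4/(n:ℝ)^2)) * ((n:ℝ)^2 * (S4 + gammaNorm σ * (1 - gammaNorm σ)
              * alphaFrac σ (σ v)^2))
              = (l^2 * 4) * S4 + (l^2 * 4) * (gammaNorm σ * (1 - gammaNorm σ))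
                * alphaFrac σ (σ v)^2 from by field_simp),
            Finset.sum_add_distrib, Finset.sum_const, Finset.card_univ, Fintype.card_fin,
            nsmul_eq_mul, ← Finset.mul_sum, hv2]
          ring
      _ ≤ (l^2 * 4) * ((n:ℝ) * (2 * gammaNorm σ ^ 2)) := by
          apply mul_le_mul_of_nonneg_left _ (by positivity)
          have := mul_le_mul_of_nonneg_left hfin hnR.le
          nlinarith [this]
      _ = (Fintype.card (Fin n × Fin n) : ℝ) * (l^2 * (8 * gammaNorm σ ^ 2 / n)) := by
          rw [hcardB]
          field_simp
          ring

/-- **Bernstein conditions for `α_t`, `δ_t` and `γ_t`.**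
Conditioned on the configuration `σ` at round `t-1` (by the Markov property, the
conditional law of round `t` is the one-step distribution from `σ`):
(i) `α_t(i) - E[α_t(i)]` satisfies a `(1/n, s)`-Bernstein condition;
(ii) `δ_t(i,j) - E[δ_t(i,j)]` satisfies a `(2/n, s)`-Bernstein condition;
(iii) `γ_{t-1} - γ_t` satisfies a one-sided `(2√γ_{t-1}/n, s)`-Bernstein condition,
with the stated values of `s` for each of the two dynamics. -/
theorem bernstein_condition_for_dynamics :
    ∀ n k : ℕ, 2 ≤ k → k ≤ n → ∀ σ : Config n k, ∀ i j : Fin k, i ≠ j →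
      -- (i) α, 3-Majority
      (BernsteinCond (maj3Step σ)
        (fun τ => alphaFrac τ i - ∫ τ', alphaFrac τ' i ∂(maj3Step σ))
        (1 / n) (alphaFrac σ i / n) ∧
      -- (i) α, 2-Choices
      BernsteinCond (ch2Step σ)
        (fun τ => alphaFrac τ i - ∫ τ', alphaFrac τ' i ∂(ch2Step σ))
        (1 / n) (alphaFrac σ i * (alphaFrac σ i + gammaNorm σ) / n)) ∧
      -- (ii) δ, 3-Majority
      (BernsteinCond (maj3Step σ)
        (fun τ => (alphaFrac τ i - alphaFrac τ j) -
          ∫ τ', (alphaFrac τ' i - alphaFrac τ' j) ∂(maj3Step σ))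
        (2 / n) (2 / n * (alphaFrac σ i + alphaFrac σ j)) ∧
      -- (ii) δ, 2-Choices
      BernsteinCond (ch2Step σ)
        (fun τ => (alphaFrac τ i - alphaFrac τ j) -
          ∫ τ', (alphaFrac τ' i - alphaFrac τ' j) ∂(ch2Step σ))
        (2 / n) (1 / n * (alphaFrac σ i + alphaFrac σ j) *
          (alphaFrac σ i + alphaFrac σ j + gammaNorm σ))) ∧
      -- (iii) γ, 3-Majority
      (OneSidedBernsteinCond (maj3Step σ) (fun τ => gammaNorm σ - gammaNorm τ)
        (2 * Real.sqrt (gammaNorm σ) / n) (4 * gammaNorm σ ^ (3/2 : ℝ) / n) ∧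
      -- (iii) γ, 2-Choices
      OneSidedBernsteinCond (ch2Step σ) (fun τ => gammaNorm σ - gammaNorm τ)
        (2 * Real.sqrt (gammaNorm σ) / n) (8 * gammaNorm σ ^ 2 / n)) := by
  intro n k hk hkn σ i j hij
  have hn : 0 < n := lt_of_lt_of_le (by omega) hkn
  exact ⟨⟨part_alpha_maj3 hn σ i, part_alpha_ch2 hn σ i⟩,
    ⟨part_delta_maj3 hn σ hij, part_delta_ch2 hn σ hij⟩,
    ⟨part_gamma_maj3 hn σ, part_gamma_ch2 hn σ⟩⟩
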